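/- arXiv:1208.5139 — 5 statements merged into one kernel-verified Lean document; each statement's English description precedes it below -/
import Mathlib

section
/- The linear isomorphism φ_k : D_k → Ser_k preserves multiplication, i.e. φ_k(d_1 d_2) = φ_k(d_1) φ_k(d_2) for all d_1, d_2 ∈ D_k; hence the diagram superalgebra D_k is isomorphic to the Sergeev superalgebra Ser_k as an associative superalgebra. -/
/-!
`Ser k` acts on `D_k`: `s_i` by stacking the diagram of the transposition on top, and `c_i` by
toggling the mark of the edge through `i`, with the sign of moving `c_i` past the earlier marked
edges. The defining relations of `Ser k` hold for these operators on basis diagrams, so they define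
an algebra map `serAction : Ser k → End(D_k)`. Adding the marked edges of `A` one at a time, from
the smallest, shows that `σ c_A` acts as left multiplication by the diagram `(σ, A)`, while `φ`
turns this action into left multiplication in `Ser k`. Hence
`φ (d₁ d₂) = φ (serAction (φ d₁) d₂) = φ d₁ φ d₂`, and `a ↦ serAction a 1` inverts `φ`.
-/

noncomputable section

namespace SergeevSW

/-- the adjacent transposition `(i, i+1)` of `Fin k` (0-based) -/
def swapIdx {k : ℕ} (i : ℕ) (h : i + 1 < k) : Equiv.Perm (Fin k) :=
  Equiv.swap ⟨i, Nat.lt_of_succ_lt h⟩ ⟨i + 1, h⟩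

/-- generators of the Sergeev superalgebra `Ser_k` -/
inductive SGen (k : ℕ)
  | s (i : ℕ) (h : i + 1 < k)
  | c (i : Fin k)

def σg {k : ℕ} (i : ℕ) (h : i + 1 < k) : FreeAlgebra ℂ (SGen k) :=
  FreeAlgebra.ι ℂ (SGen.s i h)

def γg {k : ℕ} (i : Fin k) : FreeAlgebra ℂ (SGen k) :=
  FreeAlgebra.ι ℂ (SGen.c i)

/-- defining relations of the Sergeev superalgebra -/
inductive SerRel (k : ℕ) : FreeAlgebra ℂ (SGen k) → FreeAlgebra ℂ (SGen k) → Prop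
  | ss (i : ℕ) (h : i + 1 < k) : SerRel k (σg i h * σg i h) 1
  | braid (i : ℕ) (h : i + 1 < k) (h' : i + 2 < k) :
      SerRel k (σg i h * σg (i+1) h' * σg i h) (σg (i+1) h' * σg i h * σg (i+1) h')
  | scomm (i j : ℕ) (hi : i + 1 < k) (hj : j + 1 < k) (hij : i + 1 < j) :
      SerRel k (σg i hi * σg j hj) (σg j hj * σg i hi)
  | cc (i : Fin k) : SerRel k (γg i * γg i) (-1)
  | canti (i j : Fin k) (hij : i ≠ j) : SerRel k (γg i * γg j) (-(γg j * γg i))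
  | scs (i : ℕ) (h : i + 1 < k) :
      SerRel k (σg i h * γg ⟨i, Nat.lt_of_succ_lt h⟩ * σg i h) (γg ⟨i+1, h⟩)
  | sc (i : ℕ) (h : i + 1 < k) (j : Fin k) (h1 : j.val ≠ i) (h2 : j.val ≠ i + 1) :
      SerRel k (σg i h * γg j) (γg j * σg i h)

/-- the Sergeev superalgebra, presented by generators and relations -/
abbrev Ser (k : ℕ) := RingQuot (SerRel k)

def sg {k : ℕ} (i : ℕ) (h : i + 1 < k) : Ser k :=
  RingQuot.mkAlgHom ℂ (SerRel k) (σg i h)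

def cg {k : ℕ} (i : Fin k) : Ser k :=
  RingQuot.mkAlgHom ℂ (SerRel k) (γg i)

/-- A `k`-superdiagram: the underlying permutation `σ` (top vertex `t` is joined to
bottom vertex `σ t`) together with the set of top vertices of the marked edges. -/
abbrev DDiag (k : ℕ) := Equiv.Perm (Fin k) × Finset (Fin k)

/-- number of inversions (pairs where an earlier entry is strictly bigger), i.e. the
arranging number of a sequence -/
def inversions {k : ℕ} : List (Fin k) → ℕ
  | [] => 0
  | a :: l => l.countP (fun b => decide (b < a)) + inversions l

/-- increasing enumeration of a finite set of positions -/
def asList {k : ℕ} (A : Finset (Fin k)) : List (Fin k) := A.sort (· ≤ ·)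

/-- the sign `(-1)^{ρ(d₁,d₂)+ℓ(d₁,d₂)}` in the product of two `k`-superdiagrams:
`ρ` counts the composite edges made of a marked edge of `d₁` and a marked edge of
`d₂`, and `ℓ` is the arranging number of the sequence `a_1⋯a_p b_1⋯b_q` attached to
the marked edges. -/
def dSign {k : ℕ} (x y : DDiag k) : ℂ :=
  (-1 : ℂ) ^ ((x.2.image (fun t => y.1⁻¹ t) ∩ y.2).card
    + inversions (((asList x.2).map (fun t => y.1⁻¹ t)) ++ asList y.2))

/-- marked concatenation (placing `x` under `y`): composite permutation and marked
edge set (an edge is marked iff it comes from an odd number of marked edges). -/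
def dComp {k : ℕ} (x y : DDiag k) : DDiag k :=
  (x.1 * y.1, symmDiff (x.2.image (fun t => y.1⁻¹ t)) y.2)

/-- the superspace `D_k` with basis the `k`-superdiagrams -/
abbrev Dk (k : ℕ) := DDiag k →₀ ℂ

/-- the multiplication on `D_k`: `d₁ d₂ = (-1)^{ρ(d₁,d₂)+ℓ(d₁,d₂)} d₁ * d₂` -/
noncomputable instance {k : ℕ} : Mul (Dk k) :=
  ⟨fun f g => f.sum fun x a => g.sum fun y b =>
    Finsupp.single (dComp x y) (a * b * dSign x y)⟩

/-- the ordered product `c_{i_1} ⋯ c_{i_m}` over the increasing enumeration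
`i_1 < ⋯ < i_m` of `A` -/
def cProd {k : ℕ} (A : Finset (Fin k)) : Ser k :=
  ((asList A).map (fun i => cg i)).prod

open Finset
open scoped symmDiff

theorem neg_one_pow_card_symmDiff {α R : Type*} [DecidableEq α] [Monoid R] [HasDistribNeg R]
    (s t : Finset α) : (-1 : R) ^ #(s ∆ t) = (-1) ^ #s * (-1) ^ #t := by
  have hst : #(s ∆ t) = #(s \ t) + #(t \ s) := by
    rw [symmDiff_def, sup_eq_union, card_union_of_disjoint disjoint_sdiff_sdiff]
  have hs := card_sdiff_add_card_inter s t
  have ht := card_sdiff_add_card_inter t s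
  rw [inter_comm] at ht
  rw [← pow_add, show #s + #t = #(s ∆ t) + 2 * #(s ∩ t) by omega, pow_add, pow_mul, neg_one_sq,
    one_pow, mul_one]

theorem filter_symmDiff {α : Type*} [DecidableEq α] (p : α → Prop) [DecidablePred p]
    (s t : Finset α) : {x ∈ s ∆ t | p x} = {x ∈ s | p x} ∆ {x ∈ t | p x} := by
  ext x
  simp only [mem_filter, mem_symmDiff]
  tauto

theorem card_filter_le_eq_card_filter_lt_add {α : Type*} [LinearOrder α] (s : Finset α) (j : α) :
    #{b ∈ s | b ≤ j} = #{b ∈ s | b < j} + if j ∈ s then 1 else 0 := by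
  have hsplit : {b ∈ s | b ≤ j} = {b ∈ s | b < j} ∪ {b ∈ s | b = j} := by
    ext b
    simp only [mem_union, mem_filter, le_iff_lt_or_eq]
    tauto
  rw [hsplit, card_union_of_disjoint (disjoint_filter.2 fun b _ h => h.ne), filter_eq']
  split_ifs <;> simp

theorem singleton_symmDiff_of_notMem {α : Type*} [DecidableEq α] {a : α} {s : Finset α}
    (ha : a ∉ s) : {a} ∆ s = insert a s := by
  ext b
  by_cases hb : b = a
  · subst hb; simp [mem_symmDiff, ha]
  · simp [mem_symmDiff, hb]

theorem swap_mul_swap_mul_swap_braid {α : Type*} [DecidableEq α] {a b c : α} (hab : a ≠ b)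
    (hac : a ≠ c) (hbc : b ≠ c) :
    Equiv.swap a b * Equiv.swap b c * Equiv.swap a b
      = Equiv.swap b c * Equiv.swap a b * Equiv.swap b c := by
  rw [Equiv.swap_mul_swap_mul_swap hab hac, Equiv.swap_comm a b, Equiv.swap_comm b c,
    Equiv.swap_mul_swap_mul_swap hbc.symm hac.symm, Equiv.swap_comm]

variable {k : ℕ}

lemma swapIdx_inv_apply (i : ℕ) (h : i + 1 < k) (j : Fin k) :
    (swapIdx i h)⁻¹ j = swapIdx i h j := by
  rw [swapIdx, Equiv.swap_inv]

lemma swapIdx_braid (i : ℕ) (h : i + 1 < k) (h' : i + 2 < k) :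
    swapIdx i h * swapIdx (i + 1) h' * swapIdx i h
      = swapIdx (i + 1) h' * swapIdx i h * swapIdx (i + 1) h' :=
  swap_mul_swap_mul_swap_braid (Fin.ne_of_val_ne (by dsimp only; omega))
    (Fin.ne_of_val_ne (by dsimp only; omega)) (Fin.ne_of_val_ne (by dsimp only; omega))

lemma swapIdx_commute {i j : ℕ} (hi : i + 1 < k) (hj : j + 1 < k) (hij : i + 1 < j) :
    swapIdx i hi * swapIdx j hj = swapIdx j hj * swapIdx i hi := by
  refine (Equiv.Perm.disjoint_swap_swap ?_).commute.eq
  simp only [List.nodup_cons, List.mem_cons, List.not_mem_nil, List.nodup_nil, Fin.mk.injEq,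
    or_false, not_false_eq_true, and_true]
  omega

theorem swapIdx_induction {motive : Equiv.Perm (Fin k) → Prop} (one : motive 1)
    (swap_mul : ∀ i (h : i + 1 < k) σ, motive σ → motive (swapIdx i h * σ))
    (σ : Equiv.Perm (Fin k)) : motive σ := by
  cases k with
  | zero => rwa [Subsingleton.elim σ 1]
  | succ n =>
    have hσ : σ ∈ Submonoid.closure (Set.range fun i : Fin n => Equiv.swap i.castSucc i.succ) := by
      rw [Equiv.Perm.mclosure_swap_castSucc_succ]
      trivial
    induction hσ using Submonoid.closure_induction_left with
    | one => exact one
    | mul_left _ hx _ _ ih =>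
      obtain ⟨i, rfl⟩ := hx
      exact swap_mul i (by omega) _ ih

/-- The sign of `c_j c_{i_1} ⋯ c_{i_m} = ± c_{{j} ∆ B}` for `B = {i_1 < ⋯ < i_m}`. -/
def cliffordSign (j : Fin k) (B : Finset (Fin k)) : ℂ :=
  (-1) ^ #{b ∈ B | b ≤ j}

lemma cliffordSign_symmDiff (j : Fin k) (s t : Finset (Fin k)) :
    cliffordSign j (s ∆ t) = cliffordSign j s * cliffordSign j t := by
  rw [cliffordSign, filter_symmDiff, neg_one_pow_card_symmDiff]; rfl

lemma cliffordSign_mul_self (j : Fin k) (B : Finset (Fin k)) :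
    cliffordSign j B * cliffordSign j B = 1 := by
  rw [cliffordSign, ← pow_add, ← two_mul, pow_mul, neg_one_sq, one_pow]

lemma cliffordSign_singleton (j i : Fin k) :
    cliffordSign j {i} = if i ≤ j then -1 else 1 := by
  rw [cliffordSign, filter_singleton]
  split_ifs <;> simp

lemma cliffordSign_singleton_self (j : Fin k) : cliffordSign j {j} = -1 := by
  simp [cliffordSign_singleton]

lemma cliffordSign_singleton_comm {i j : Fin k} (hij : i ≠ j) :
    cliffordSign i {j} = -cliffordSign j {i} := by
  rcases hij.lt_or_gt with h | h <;>
    simp [cliffordSign_singleton, h.le, h.not_ge]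

lemma cliffordSign_of_forall_lt {j : Fin k} {B : Finset (Fin k)} (hB : ∀ b ∈ B, j < b) :
    cliffordSign j B = 1 := by
  rw [cliffordSign, filter_false_of_mem fun b hb => (hB b hb).not_ge, card_empty, pow_zero]

lemma inversions_eq_zero_of_pairwise {l : List (Fin k)} (hl : l.Pairwise (· ≤ ·)) :
    inversions l = 0 := by
  induction l with
  | nil => rfl
  | cons a l ih =>
    rw [inversions, ih hl.of_cons, List.countP_eq_zero.2 fun b hb => ?_]
    simpa using List.rel_of_pairwise_cons hl hb

lemma countP_asList (B : Finset (Fin k)) (p : Fin k → Prop) [DecidablePred p] :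
    (asList B).countP (fun b => decide (p b)) = #{b ∈ B | p b} := by
  rw [asList, (sort_perm_toList B _).countP_eq, ← Multiset.coe_countP, coe_toList, card_filter]
  simp [Multiset.countP_eq_card_filter, Finset.filter]

lemma asList_insert_of_lt {a : Fin k} {T : Finset (Fin k)} (ha : ∀ t ∈ T, a < t) :
    asList (insert a T) = a :: asList T :=
  sort_insert _ (fun t ht => (ha t ht).le) fun haT => lt_irrefl a (ha a haT)

lemma dSign_empty_left (σ : Equiv.Perm (Fin k)) (y : DDiag k) : dSign (σ, ∅) y = 1 := by
  simp [dSign, asList, inversions_eq_zero_of_pairwise (pairwise_sort _ _)]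

lemma dSign_one_empty_right (x : DDiag k) : dSign x (1, ∅) = 1 := by
  simp [dSign, asList, inversions_eq_zero_of_pairwise (pairwise_sort _ _)]

lemma dComp_one_empty_right (x : DDiag k) : dComp x (1, ∅) = x := by
  simp [dComp, ← bot_eq_empty]

lemma dSign_insert_of_lt (σ τ : Equiv.Perm (Fin k)) (B : Finset (Fin k)) {a : Fin k}
    {T : Finset (Fin k)} (ha : ∀ t ∈ T, a < t) :
    dSign (σ, insert a T) (τ, B)
      = cliffordSign (τ⁻¹ a) (T.image (τ⁻¹ ·) ∆ B) * dSign (σ, T) (τ, B) := by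
  set w := τ⁻¹ a
  set U := T.image (τ⁻¹ ·)
  have hwU : w ∉ U := by
    simp only [U, w, mem_image, EmbeddingLike.apply_eq_iff_eq, exists_eq_right]
    exact fun haT => lt_irrefl a (ha a haT)
  have hρ : #((insert a T).image (τ⁻¹ ·) ∩ B) = #(U ∩ B) + if w ∈ B then 1 else 0 := by
    rw [image_insert]
    split_ifs with hwB
    · rw [insert_inter_of_mem hwB, card_insert_of_notMem fun h => hwU (mem_inter.1 h).1]
    · rw [insert_inter_of_notMem hwB, add_zero]
  have hU : #{u ∈ U | u < w} = #{t ∈ T | τ⁻¹ t < w} := by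
    rw [filter_image, card_image_of_injective _ τ⁻¹.injective]
  have hℓ : inversions (((asList (insert a T)).map (τ⁻¹ ·)) ++ asList B)
      = #{u ∈ U | u < w} + #{b ∈ B | b < w}
        + inversions (((asList T).map (τ⁻¹ ·)) ++ asList B) := by
    rw [asList_insert_of_lt ha, List.map_cons, List.cons_append, inversions, List.countP_append,
      List.countP_map, hU, ← countP_asList, ← countP_asList]
    rfl
  have hsign : cliffordSign w (U ∆ B)
      = (-1) ^ (#{u ∈ U | u < w} + #{b ∈ B | b < w} + if w ∈ B then 1 else 0) := by
    rw [cliffordSign_symmDiff, cliffordSign, cliffordSign, card_filter_le_eq_card_filter_lt_add,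
      card_filter_le_eq_card_filter_lt_add, if_neg hwU, ← pow_add]
    ring_nf
  simp only [dSign]
  rw [hρ, hℓ, hsign, ← pow_add]
  congr 1
  simp only [U]
  omega

lemma single_mul_single (x y : DDiag k) (a b : ℂ) :
    (Finsupp.single x a : Dk k) * Finsupp.single y b
      = Finsupp.single (dComp x y) (a * b * dSign x y) := by
  change (Finsupp.single x a).sum _ = _
  rw [Finsupp.sum_single_index (by simp), Finsupp.sum_single_index (by simp)]

lemma mul_eq_sum_sum (f g : Dk k) :
    f * g = f.sum fun x a => g.sum fun y b => Finsupp.single x a * Finsupp.single y b := by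
  simp only [single_mul_single]
  rfl

lemma sg_mul_self (i : ℕ) (h : i + 1 < k) : sg i h * sg i h = 1 := by
  simpa [sg] using RingQuot.mkAlgHom_rel ℂ (SerRel.ss i h)

lemma cg_mul_self (i : Fin k) : cg i * cg i = -1 := by
  simpa [cg] using RingQuot.mkAlgHom_rel ℂ (SerRel.cc i)

lemma cg_mul_cg_of_ne {i j : Fin k} (hij : i ≠ j) : cg i * cg j = -(cg j * cg i) := by
  simpa [cg] using RingQuot.mkAlgHom_rel ℂ (SerRel.canti i j hij)

lemma sg_mul_cg_mul_sg (i : ℕ) (h : i + 1 < k) :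
    sg i h * cg ⟨i, Nat.lt_of_succ_lt h⟩ * sg i h = cg ⟨i + 1, h⟩ := by
  simpa [sg, cg] using RingQuot.mkAlgHom_rel ℂ (SerRel.scs i h)

lemma sg_mul_cg_of_ne (i : ℕ) (h : i + 1 < k) (j : Fin k) (h1 : j.val ≠ i) (h2 : j.val ≠ i + 1) :
    sg i h * cg j = cg j * sg i h := by
  simpa [sg, cg] using RingQuot.mkAlgHom_rel ℂ (SerRel.sc i h j h1 h2)

lemma cg_mul_sg (i : ℕ) (h : i + 1 < k) (j : Fin k) :
    cg j * sg i h = sg i h * cg (swapIdx i h j) := by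
  have hconj := sg_mul_cg_mul_sg i h
  by_cases hj : j = ⟨i, Nat.lt_of_succ_lt h⟩
  · subst hj
    rw [swapIdx, Equiv.swap_apply_left, ← hconj, ← mul_assoc, ← mul_assoc, sg_mul_self, one_mul]
  by_cases hj' : j = ⟨i + 1, h⟩
  · subst hj'
    rw [swapIdx, Equiv.swap_apply_right, ← hconj, mul_assoc, sg_mul_self, mul_one]
  rw [swapIdx, Equiv.swap_apply_of_ne_of_ne hj hj',
    sg_mul_cg_of_ne i h j (fun h => hj (Fin.ext h)) (fun h => hj' (Fin.ext h))]

lemma cg_mul_S {S : Equiv.Perm (Fin k) →* Ser k}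
    (hS : ∀ (i : ℕ) (h : i + 1 < k), S (swapIdx i h) = sg i h) (σ : Equiv.Perm (Fin k))
    (j : Fin k) : cg j * S σ = S σ * cg (σ⁻¹ j) := by
  induction σ using swapIdx_induction generalizing j with
  | one => simp
  | swap_mul i h σ ih =>
    rw [map_mul, hS, ← mul_assoc, cg_mul_sg, mul_assoc, ih, ← mul_assoc, mul_inv_rev,
      Equiv.Perm.mul_apply, swapIdx_inv_apply]

lemma cProd_empty : cProd (∅ : Finset (Fin k)) = 1 := by
  simp [cProd, asList]

lemma cProd_insert_of_lt {a : Fin k} {T : Finset (Fin k)} (ha : ∀ t ∈ T, a < t) :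
    cProd (insert a T) = cg a * cProd T := by
  rw [cProd, asList_insert_of_lt ha, List.map_cons, List.prod_cons, cProd]

lemma cg_mul_cProd (j : Fin k) (B : Finset (Fin k)) :
    cg j * cProd B = cliffordSign j B • cProd ({j} ∆ B) := by
  have of_forall_lt {B : Finset (Fin k)} (hB : ∀ b ∈ B, j < b) :
      cg j * cProd B = cliffordSign j B • cProd ({j} ∆ B) := by
    rw [cliffordSign_of_forall_lt hB, one_smul,
      singleton_symmDiff_of_notMem fun h => (hB j h).false, cProd_insert_of_lt hB]
  induction B using Finset.induction_on_min with
  | empty => exact of_forall_lt (by simp)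
  | insert a T ha ih =>
    have haT : a ∉ T := fun h => lt_irrefl a (ha a h)
    rcases lt_trichotomy j a with hja | rfl | haj
    · exact of_forall_lt (by simpa [hja] using fun t ht => hja.trans (ha t ht))
    · rw [cProd_insert_of_lt ha, ← mul_assoc, cg_mul_self, ← singleton_symmDiff_of_notMem haT,
        symmDiff_symmDiff_cancel_left, cliffordSign_symmDiff, cliffordSign_singleton_self,
        cliffordSign_of_forall_lt ha, mul_one, neg_one_mul (cProd T)]
      exact (neg_one_smul ℂ _).symm
    · have hajT : a ∉ {j} ∆ T := by simp [mem_symmDiff, haj.ne, haT]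
      have hlt : ∀ t ∈ {j} ∆ T, a < t := by
        intro t ht
        rcases mem_symmDiff.1 ht with ⟨ht, -⟩ | ⟨ht, -⟩
        · rwa [mem_singleton.1 ht]
        · exact ha t ht
      rw [cProd_insert_of_lt ha, ← mul_assoc, cg_mul_cg_of_ne haj.ne', neg_mul (cg a * cg j),
        mul_assoc, ih, mul_smul_comm, ← singleton_symmDiff_of_notMem haT, symmDiff_left_comm,
        singleton_symmDiff_of_notMem hajT, cProd_insert_of_lt hlt, cliffordSign_symmDiff,
        cliffordSign_singleton, if_pos haj.le, neg_one_mul]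
      exact (neg_smul (cliffordSign j T) _).symm

/-- Left multiplication by the unmarked diagram of `σ`. -/
def permAction : Equiv.Perm (Fin k) →* Module.End ℂ (Dk k) where
  toFun σ := Finsupp.lmapDomain ℂ ℂ fun y : DDiag k => (σ * y.1, y.2)
  map_one' := by ext; simp
  map_mul' σ τ := by ext; simp [mul_assoc]

lemma permAction_single (σ : Equiv.Perm (Fin k)) (y : DDiag k) (b : ℂ) :
    permAction σ (Finsupp.single y b) = Finsupp.single (σ * y.1, y.2) b := by
  simp [permAction]

/-- Left multiplication by the diagram of `c_i` (identity permutation, edge `i` marked). -/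
def cliffordAction (i : Fin k) : Module.End ℂ (Dk k) :=
  Finsupp.lsum ℂ fun y : DDiag k =>
    cliffordSign (y.1⁻¹ i) y.2 • Finsupp.lsingle (y.1, {y.1⁻¹ i} ∆ y.2)

lemma cliffordAction_single (i : Fin k) (y : DDiag k) (b : ℂ) :
    cliffordAction i (Finsupp.single y b)
      = Finsupp.single (y.1, {y.1⁻¹ i} ∆ y.2) (cliffordSign (y.1⁻¹ i) y.2 * b) := by
  simp [cliffordAction, Finsupp.smul_single, mul_comm]

lemma cliffordAction_mul_self (i : Fin k) : cliffordAction i * cliffordAction i = -1 := by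
  refine Finsupp.lhom_ext fun ⟨τ, B⟩ b => ?_
  simp only [Module.End.mul_apply, cliffordAction_single]
  rw [symmDiff_symmDiff_cancel_left, cliffordSign_symmDiff, cliffordSign_singleton_self,
    LinearMap.neg_apply, Module.End.one_apply, ← Finsupp.single_neg]
  congr 1
  linear_combination (-b) * cliffordSign_mul_self (τ⁻¹ i) B

lemma cliffordAction_mul_of_ne {i j : Fin k} (hij : i ≠ j) :
    cliffordAction i * cliffordAction j = -(cliffordAction j * cliffordAction i) := by
  refine Finsupp.lhom_ext fun ⟨τ, B⟩ b => ?_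
  simp only [Module.End.mul_apply, cliffordAction_single]
  have huv : τ⁻¹ i ≠ τ⁻¹ j := fun h => hij (τ⁻¹.injective h)
  rw [LinearMap.neg_apply, Module.End.mul_apply, cliffordAction_single, cliffordAction_single,
    ← Finsupp.single_neg, symmDiff_left_comm]
  congr 1
  simp only [cliffordSign_symmDiff, cliffordSign_singleton_comm huv]
  ring

lemma permAction_mul_cliffordAction (σ : Equiv.Perm (Fin k)) (j : Fin k) :
    permAction σ * cliffordAction j = cliffordAction (σ j) * permAction σ := by
  refine Finsupp.lhom_ext fun ⟨τ, B⟩ b => ?_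
  simp only [Module.End.mul_apply, cliffordAction_single, permAction_single]
  simp

def generatorAction : SGen k → Module.End ℂ (Dk k)
  | .s i h => permAction (swapIdx i h)
  | .c i => cliffordAction i

lemma lift_generatorAction_rel ⦃a b : FreeAlgebra ℂ (SGen k)⦄ (hab : SerRel k a b) :
    FreeAlgebra.lift ℂ generatorAction a = FreeAlgebra.lift ℂ generatorAction b := by
  have hs (i : ℕ) (h : i + 1 < k) :
      FreeAlgebra.lift ℂ generatorAction (σg i h) = permAction (swapIdx i h) :=
    FreeAlgebra.lift_ι_apply _ _
  have hc (i : Fin k) : FreeAlgebra.lift ℂ generatorAction (γg i) = cliffordAction i :=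
    FreeAlgebra.lift_ι_apply _ _
  induction hab with
  | ss i h => rw [map_mul, hs, ← map_mul, swapIdx, Equiv.swap_mul_self, map_one, map_one]
  | braid i h h' =>
    simp only [map_mul, hs]
    rw [← map_mul, ← map_mul, ← map_mul, ← map_mul, swapIdx_braid]
  | scomm i j hi hj hij =>
    rw [map_mul, map_mul, hs, hs, ← map_mul, ← map_mul, swapIdx_commute hi hj hij]
  | cc i => simp [hc, cliffordAction_mul_self]
  | canti i j hij => simp [hc, cliffordAction_mul_of_ne hij]
  | scs i h =>
    rw [map_mul, map_mul, hs, hc, hc, permAction_mul_cliffordAction, mul_assoc, ← map_mul]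
    simp [swapIdx]
  | sc i h j h1 h2 =>
    rw [map_mul, map_mul, hs, hc, permAction_mul_cliffordAction, swapIdx,
      Equiv.swap_apply_of_ne_of_ne (fun h => h1 (congrArg Fin.val h))
        (fun h => h2 (congrArg Fin.val h))]

def serAction : Ser k →ₐ[ℂ] Module.End ℂ (Dk k) :=
  RingQuot.liftAlgHom ℂ ⟨FreeAlgebra.lift ℂ generatorAction, lift_generatorAction_rel⟩

lemma serAction_sg (i : ℕ) (h : i + 1 < k) : serAction (sg i h) = permAction (swapIdx i h) := by
  rw [serAction, sg, RingQuot.liftAlgHom_mkAlgHom_apply, σg, FreeAlgebra.lift_ι_apply]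
  rfl

lemma serAction_cg (i : Fin k) : serAction (cg i) = cliffordAction i := by
  rw [serAction, cg, RingQuot.liftAlgHom_mkAlgHom_apply, γg, FreeAlgebra.lift_ι_apply]
  rfl

lemma serAction_S {S : Equiv.Perm (Fin k) →* Ser k}
    (hS : ∀ (i : ℕ) (h : i + 1 < k), S (swapIdx i h) = sg i h) (σ : Equiv.Perm (Fin k)) :
    serAction (S σ) = permAction σ := by
  induction σ using swapIdx_induction with
  | one => simp
  | swap_mul i h σ ih => rw [map_mul, map_mul, map_mul, hS, serAction_sg, ih]

lemma serAction_cProd_single (A : Finset (Fin k)) (y : DDiag k) (b : ℂ) :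
    serAction (cProd A) (Finsupp.single y b)
      = Finsupp.single (y.1, A.image (y.1⁻¹ ·) ∆ y.2) (dSign (1, A) y * b) := by
  induction A using Finset.induction_on_min with
  | empty =>
    rw [cProd_empty, map_one, Module.End.one_apply, dSign_empty_left, image_empty, ← bot_eq_empty,
      bot_symmDiff, one_mul]
  | insert a T ha ih =>
    have haT : y.1⁻¹ a ∉ T.image (y.1⁻¹ ·) := by
      simpa using fun h => lt_irrefl a (ha a h)
    rw [cProd_insert_of_lt ha, map_mul, Module.End.mul_apply, ih, serAction_cg,
      cliffordAction_single, dSign_insert_of_lt _ _ _ ha, image_insert,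
      ← singleton_symmDiff_of_notMem haT, symmDiff_assoc, mul_assoc]

lemma serAction_S_mul_cProd {S : Equiv.Perm (Fin k) →* Ser k}
    (hS : ∀ (i : ℕ) (h : i + 1 < k), S (swapIdx i h) = sg i h) (x y : DDiag k) (b : ℂ) :
    serAction (S x.1 * cProd x.2) (Finsupp.single y b)
      = Finsupp.single (dComp x y) (dSign x y * b) := by
  rw [map_mul, Module.End.mul_apply, serAction_cProd_single, serAction_S hS, permAction_single]
  rfl

/-- The map `φ_k` of the statement. -/
def diagramToSer (S : Equiv.Perm (Fin k) →* Ser k) : Dk k →ₗ[ℂ] Ser k :=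
  Finsupp.linearCombination ℂ fun x : DDiag k => S x.1 * cProd x.2

section diagramToSer

variable {S : Equiv.Perm (Fin k) →* Ser k}

lemma diagramToSer_single (x : DDiag k) (b : ℂ) :
    diagramToSer S (Finsupp.single x b) = b • (S x.1 * cProd x.2) :=
  Finsupp.linearCombination_single _ _ _

lemma diagramToSer_permAction (σ : Equiv.Perm (Fin k)) (d : Dk k) :
    diagramToSer S (permAction σ d) = S σ * diagramToSer S d := by
  induction d using Finsupp.induction_linear with
  | zero => simp
  | add f g hf hg => rw [map_add, map_add, hf, hg, map_add, mul_add]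
  | single y b =>
    rw [permAction_single, diagramToSer_single, diagramToSer_single, map_mul, mul_smul_comm,
      mul_assoc]

lemma diagramToSer_cliffordAction (hS : ∀ (i : ℕ) (h : i + 1 < k), S (swapIdx i h) = sg i h)
    (i : Fin k) (d : Dk k) : diagramToSer S (cliffordAction i d) = cg i * diagramToSer S d := by
  induction d using Finsupp.induction_linear with
  | zero => simp
  | add f g hf hg => rw [map_add, map_add, hf, hg, map_add, mul_add]
  | single y b =>
    rw [cliffordAction_single, diagramToSer_single, diagramToSer_single, mul_smul_comm,
      ← mul_assoc, cg_mul_S hS, mul_assoc, cg_mul_cProd, mul_smul_comm, smul_smul, mul_comm b]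

lemma diagramToSer_serAction (hS : ∀ (i : ℕ) (h : i + 1 < k), S (swapIdx i h) = sg i h)
    (a : Ser k) (d : Dk k) : diagramToSer S (serAction a d) = a * diagramToSer S d := by
  obtain ⟨w, rfl⟩ := RingQuot.mkAlgHom_surjective ℂ (SerRel k) a
  induction w using FreeAlgebra.induction generalizing d with
  | grade0 r => simp [Algebra.smul_def]
  | grade1 x =>
    cases x with
    | s i h =>
      rw [show RingQuot.mkAlgHom ℂ (SerRel k) (FreeAlgebra.ι ℂ (SGen.s i h)) = sg i h from rfl,
        serAction_sg, diagramToSer_permAction, hS]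
    | c i =>
      rw [show RingQuot.mkAlgHom ℂ (SerRel k) (FreeAlgebra.ι ℂ (SGen.c i)) = cg i from rfl,
        serAction_cg, diagramToSer_cliffordAction hS]
  | mul w₁ w₂ ih₁ ih₂ => rw [map_mul, map_mul, Module.End.mul_apply, ih₁, ih₂, mul_assoc]
  | add w₁ w₂ ih₁ ih₂ => rw [map_add, map_add, LinearMap.add_apply, map_add, ih₁, ih₂, add_mul]

lemma diagramToSer_single_mul_single
    (hS : ∀ (i : ℕ) (h : i + 1 < k), S (swapIdx i h) = sg i h) (x y : DDiag k) (a b : ℂ) :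
    diagramToSer S (Finsupp.single x a * Finsupp.single y b)
      = diagramToSer S (Finsupp.single x a) * diagramToSer S (Finsupp.single y b) := by
  have h : (Finsupp.single x a : Dk k) * Finsupp.single y b
      = a • serAction (S x.1 * cProd x.2) (Finsupp.single y b) := by
    rw [single_mul_single, serAction_S_mul_cProd hS, Finsupp.smul_single, smul_eq_mul]
    ring_nf
  rw [h, map_smul, diagramToSer_serAction hS, diagramToSer_single x a, smul_mul_assoc]

lemma diagramToSer_mul (hS : ∀ (i : ℕ) (h : i + 1 < k), S (swapIdx i h) = sg i h)
    (f g : Dk k) : diagramToSer S (f * g) = diagramToSer S f * diagramToSer S g := by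
  conv_rhs => rw [← Finsupp.sum_single f, ← Finsupp.sum_single g]
  rw [mul_eq_sum_sum, map_finsuppSum, map_finsuppSum, map_finsuppSum, Finsupp.sum_mul]
  simp only [map_finsuppSum, diagramToSer_single_mul_single hS, Finsupp.mul_sum]

lemma diagramToSer_bijective (hS : ∀ (i : ℕ) (h : i + 1 < k), S (swapIdx i h) = sg i h) :
    Function.Bijective (diagramToSer S) := by
  let ψ (a : Ser k) : Dk k := serAction a (Finsupp.single (1, ∅) 1)
  have hleft : Function.LeftInverse ψ (diagramToSer S) := by
    intro d
    induction d using Finsupp.induction_linear with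
    | zero => simp [ψ]
    | add f g hf hg => simp only [ψ, map_add, LinearMap.add_apply] at hf hg ⊢; rw [hf, hg]
    | single x b =>
      simp only [ψ, diagramToSer_single, map_smul, LinearMap.smul_apply, serAction_S_mul_cProd hS,
        dComp_one_empty_right, dSign_one_empty_right, Finsupp.smul_single, smul_eq_mul, mul_one]
  have hright : Function.RightInverse ψ (diagramToSer S) := by
    intro a
    simp only [ψ, diagramToSer_serAction hS, diagramToSer_single, map_one, cProd_empty, one_smul,
      mul_one]
  exact ⟨hleft.injective, hright.surjective⟩

end diagramToSer

/-- Theorem 2.3: the linear isomorphism `φ_k : D_k → Ser_k`,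
`d ↦ σ c_{i_1}⋯c_{i_m}`, preserves multiplication; hence `D_k ≅ Ser_k` as
associative superalgebras.  (Here `S` is the canonical embedding of `Σ_k` into
`Ser_k`, determined by sending adjacent transpositions to the generators `s_i`.) -/
theorem diagrammatic_realization_of_Sergeev (k : ℕ)
    (S : Equiv.Perm (Fin k) →* Ser k)
    (hS : ∀ (i : ℕ) (h : i + 1 < k), S (swapIdx i h) = sg i h)
    (φ : Dk k →ₗ[ℂ] Ser k)
    (hφ : ∀ x : DDiag k, φ (Finsupp.single x 1) = S x.1 * cProd x.2) :
    (∀ d1 d2 : Dk k, φ (d1 * d2) = φ d1 * φ d2) ∧ Function.Bijective φ := by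
  obtain rfl : φ = diagramToSer S :=
    Finsupp.lhom_ext' fun x => LinearMap.ext_ring (by simp [hφ, diagramToSer_single])
  exact ⟨diagramToSer_mul hS, diagramToSer_bijective hS⟩

end SergeevSW
end
end

section
/- For every k-superdiagram d ∈ D_k, the diagrammatic action on V^{⊗k} agrees with the Sergeev action under φ_k: Φ̃_k(d) = Φ_k(φ_k(d)). -/
/-!
Both sides are linear in `d`, so it suffices to treat one diagram `(σ, A)`, and for it both sides
are built by the same recursion. Writing `σ` as a product of adjacent transpositions, precomposing
a diagram with `s_i` creates or removes exactly the crossing of the edges at `i` and `i + 1`, whose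
sign is the Koszul sign of the graded swap; adding a marked edge at a top vertex `a` to the right
of all marked edges contributes `(-1)^{m(ẽ)}`, which is the sign with which `c_a` acts. Since `Φ`
is an anti-homomorphism into matrices, these are exactly the recursions satisfied by
`Φ(S σ · c_{i_1} ⋯ c_{i_m})`.
-/

noncomputable section

namespace SergeevSW




/-- Index set `{1,…,n,1̄,…,n̄}` of the standard basis of `V = ℂ^{n|n}`. -/
abbrev BI (n : ℕ) := Fin n ⊕ Fin n

/-- parity of a basis index -/
def par {n : ℕ} : BI n → ZMod 2
  | Sum.inl _ => 0
  | Sum.inr _ => 1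

/-- bar involution on indices -/
def bar {n : ℕ} : BI n → BI n
  | Sum.inl i => Sum.inr i
  | Sum.inr i => Sum.inl i

/-- `(-1)^z` for `z : ℤ/2ℤ` -/
def sgn (z : ZMod 2) : ℂ := (-1 : ℂ) ^ z.val

/-- Index tuples for the standard basis of `V^{⊗k}`. -/
abbrev Tup (n k : ℕ) := Fin k → BI n

/-- total parity of a basis tuple -/
def parT {n k : ℕ} (x : Tup n k) : ZMod 2 := ∑ p, par (x p)

/-- sum of parities of the entries strictly before position `p` -/
def parBelow {n k : ℕ} (x : Tup n k) (p : Fin k) : ZMod 2 :=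
  ∑ q ∈ Finset.univ.filter (fun q => q < p), par (x q)

/-- The queer Lie superalgebra `q(n)`, in block matrix form `((A,B),(B,A))`;
these are exactly the matrices supercommuting with the odd involution `P`. -/
def qn (n : ℕ) : Set (Matrix (BI n) (BI n) ℂ) :=
  {M | ∀ i j : Fin n,
    M (Sum.inl i) (Sum.inl j) = M (Sum.inr i) (Sum.inr j) ∧
    M (Sum.inl i) (Sum.inr j) = M (Sum.inr i) (Sum.inl j)}

/-- a matrix is homogeneous of parity `p` with respect to a grading of the index set -/
def IsHomog {ι : Type} (pr : ι → ZMod 2) (p : ZMod 2) (M : Matrix ι ι ℂ) : Prop :=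
  ∀ i j, M i j ≠ 0 → pr i = pr j + p

/-- homogeneous component of parity `p` of a matrix -/
def matComp {ι : Type} (pr : ι → ZMod 2) (p : ZMod 2) (M : Matrix ι ι ℂ) :
    Matrix ι ι ℂ :=
  fun i j => if pr i = pr j + p then M i j else 0

/-- The diagonal action (with Koszul signs) of an element of `q(n)` on `V^{⊗k}`:
`g·(w_1⊗⋯⊗w_k) = Σ_j ±w_1⊗⋯⊗g w_j⊗⋯⊗w_k`, written as a matrix in the standard
basis of `V^{⊗k}` (rows = output index, columns = input index). -/
def rho (n k : ℕ) (M : Matrix (BI n) (BI n) ℂ) :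
    Matrix (Tup n k) (Tup n k) ℂ :=
  fun y x => ∑ p : Fin k,
    if ∀ q, q ≠ p → x q = y q then
      sgn ((par (x p) + par (y p)) * parBelow x p) * M (y p) (x p)
    else 0

/-- The supercentralizer `End_{q(n)}(V^{⊗k})`: all endomorphisms each of whose
homogeneous components supercommutes with the action of every homogeneous element
of `q(n)`. -/
def SuperCentralizer (n k : ℕ) : Set (Matrix (Tup n k) (Tup n k) ℂ) :=
  {f | ∀ M ∈ qn n, ∀ pg : ZMod 2, IsHomog par pg M → ∀ pf : ZMod 2,
    matComp parT pf f * rho n k M = sgn (pf * pg) • (rho n k M * matComp parT pf f)}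

/-- matrix of the (right-)action of the Sergeev generator `s_i` on `V^{⊗k}`:
graded place permutation of the `i`-th and `(i+1)`-th tensor factors. -/
def Smat (n k : ℕ) (i : ℕ) (h : i + 1 < k) : Matrix (Tup n k) (Tup n k) ℂ :=
  fun y x => if y = x ∘ (swapIdx i h) then
      sgn (par (x ⟨i, Nat.lt_of_succ_lt h⟩) * par (x ⟨i + 1, h⟩))
    else 0

/-- matrix of the (right-)action of the Sergeev generator `c_a` on `V^{⊗k}`:
apply `P` (with `P v_a = (-1)^{|a|+1} v_{ā}`) to the `a`-th factor, with sign
`(-1)^{|w_1|+⋯+|w_{a-1}|}`. -/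
def Cmat (n k : ℕ) (a : Fin k) : Matrix (Tup n k) (Tup n k) ℂ :=
  fun y x => if y = Function.update x a (bar (x a)) then
      sgn (parBelow x a + par (x a) + 1)
    else 0

/-- crossing sign exponent of a labeled `k`-superdiagram: each crossing of two edges
contributes the product of the parities of the bottom labels of the two edges. -/
def crossExpD {n k : ℕ} (σ : Equiv.Perm (Fin k)) (x : Tup n k) : ZMod 2 :=
  ∑ t2 : Fin k, ∑ t1 ∈ Finset.univ.filter (fun t1 => t1 < t2),
    if σ t2 < σ t1 then par (x (σ t1)) * par (x (σ t2)) else 0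

/-- sum of parities of the labels at positions `≤ b` -/
def parUpTo {n k : ℕ} (x : Tup n k) (b : Fin k) : ZMod 2 := parBelow x b + par (x b)

/-- weight `wt(ᵢd_ⱼ)` of a labeled `k`-superdiagram (`i` = bottom labels, `j` = top
labels): product of Kronecker deltas over edges (with bar on marked edges), crossing
signs, and the signs `(-1)^{m(ẽ)}` attached to the marked edges. -/
def wtD {n k : ℕ} (d : DDiag k) (i j : Tup n k) : ℂ :=
  (∏ t : Fin k,
    if t ∈ d.2 then (if j t = bar (i (d.1 t)) then (1 : ℂ) else 0)
    else (if j t = i (d.1 t) then (1 : ℂ) else 0))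
  * sgn (crossExpD d.1 i + ∑ b ∈ d.2, parUpTo j b)

/-- matrix of the (right-)action of a `k`-superdiagram on `V^{⊗k}`:
`v_i ↦ Σ_j wt(ᵢd_ⱼ) v_j`. -/
def Dmat (n k : ℕ) (d : DDiag k) : Matrix (Tup n k) (Tup n k) ℂ :=
  fun jj ii => wtD d ii jj

/-- the diagrammatic action `Φ̃_k : D_k → End_ℂ(V^{⊗k})`, extended linearly -/
noncomputable def tildePhi (n k : ℕ) (f : Dk k) : Matrix (Tup n k) (Tup n k) ℂ :=
  f.sum fun x a => a • Dmat n k x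

lemma sgn_add (a b : ZMod 2) : sgn (a + b) = sgn a * sgn b := by
  simp only [sgn, ZMod.val_add, ← neg_one_pow_eq_pow_mod_two, pow_add]

lemma sgn_zero : sgn 0 = 1 := by simp [sgn]

lemma bar_involutive {n : ℕ} : Function.Involutive (bar (n := n)) := by
  rintro (i | i) <;> rfl

lemma par_bar {n : ℕ} (i : BI n) : par (bar i) = par i + 1 := by cases i <;> rfl

lemma mul_apply_eq_of_row_eq_zero {l m o R : Type*} [Fintype m]
    [NonUnitalNonAssocSemiring R] {M : Matrix l m R} (N : Matrix m o R) {y : l} (w₀ : m)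
    (hM : ∀ w, w ≠ w₀ → M y w = 0) (x : o) : (M * N) y x = M y w₀ * N w₀ x := by
  rw [Matrix.mul_apply]
  exact Finset.sum_eq_single_of_mem _ (Finset.mem_univ _) fun w _ hw => by
    rw [hM w hw, zero_mul]

section Labels

variable {n k : ℕ}

lemma parBelow_update_of_le (x : Tup n k) {a b : Fin k} (hba : b ≤ a) (v : BI n) :
    parBelow (Function.update x a v) b = parBelow x b :=
  Finset.sum_congr rfl fun q hq =>
    by rw [Function.update_of_ne ((Finset.mem_filter.1 hq).2.trans_le hba).ne]

lemma parUpTo_update_of_lt (x : Tup n k) {a b : Fin k} (hba : b < a) (v : BI n) :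
    parUpTo (Function.update x a v) b = parUpTo x b := by
  rw [parUpTo, parUpTo, parBelow_update_of_le x hba.le, Function.update_of_ne hba.ne]

/-- `P` on the `a`-th factor sends `v_x` to `± v_(barAt a x)`. -/
def barAt (a : Fin k) (x : Tup n k) : Tup n k := Function.update x a (bar (x a))

lemma barAt_involutive (a : Fin k) : Function.Involutive (barAt (n := n) a) := fun x => by
  simp [barAt, bar_involutive (x a)]

/-- The only top labelling of `(σ, A)` with bottom labels `x` that has nonzero weight. -/
def topLabels (σ : Equiv.Perm (Fin k)) (A : Finset (Fin k)) (x : Tup n k) : Tup n k :=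
  fun t => if t ∈ A then bar (x (σ t)) else x (σ t)

lemma topLabels_empty (σ : Equiv.Perm (Fin k)) (x : Tup n k) : topLabels σ ∅ x = x ∘ σ := rfl

lemma topLabels_insert (σ : Equiv.Perm (Fin k)) {A : Finset (Fin k)} {a : Fin k} (ha : a ∉ A)
    (x : Tup n k) : topLabels σ (insert a A) x = barAt a (topLabels σ A x) := by
  funext t
  by_cases hta : t = a
  · subst hta; simp [topLabels, barAt, ha]
  · simp [topLabels, barAt, hta]

end Labels

section Crossings

variable {n k : ℕ}

lemma crossExpD_eq_sum_pairs (σ : Equiv.Perm (Fin k)) (x : Tup n k) :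
    crossExpD σ x = ∑ p : Fin k × Fin k,
      if p.1 < p.2 ∧ σ p.2 < σ p.1 then par (x (σ p.1)) * par (x (σ p.2)) else 0 := by
  rw [crossExpD, Fintype.sum_prod_type, Finset.sum_comm]
  refine Finset.sum_congr rfl fun t₂ _ => ?_
  simp only [Finset.sum_filter, ite_and]

lemma crossExpD_one (x : Tup n k) : crossExpD 1 x = 0 := by
  rw [crossExpD_eq_sum_pairs]
  exact Finset.sum_eq_zero fun p _ => if_neg fun h => h.1.not_gt h.2

lemma swapIdx_lt_swapIdx_iff {i : ℕ} (h : i + 1 < k) {a b : Fin k}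
    (hab : (a, b) ≠ (⟨i, Nat.lt_of_succ_lt h⟩, ⟨i + 1, h⟩))
    (hba : (a, b) ≠ (⟨i + 1, h⟩, ⟨i, Nat.lt_of_succ_lt h⟩)) :
    swapIdx i h a < swapIdx i h b ↔ a < b := by
  simp only [swapIdx, Equiv.swap_apply_def, ne_eq, Prod.mk.injEq, not_and_or] at *
  split_ifs <;> simp only [Fin.lt_def, Fin.ext_iff] at * <;> omega

-- Precomposing with `swapIdx i h` creates or removes exactly the crossing of the edges at `i`
-- and `i + 1`; all other pairs of edges keep their relative order.
lemma crossExpD_mul_swapIdx (σ : Equiv.Perm (Fin k)) {i : ℕ} (h : i + 1 < k) (x : Tup n k) :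
    crossExpD (σ * swapIdx i h) x = crossExpD σ x
      + par (x (σ ⟨i, Nat.lt_of_succ_lt h⟩)) * par (x (σ ⟨i + 1, h⟩)) := by
  set τ := swapIdx i h
  set a : Fin k := ⟨i, Nat.lt_of_succ_lt h⟩
  set b : Fin k := ⟨i + 1, h⟩
  have hab : a < b := Fin.mk_lt_mk.2 i.lt_succ_self
  have hτa : τ a = b := Equiv.swap_apply_left _ _
  have hτb : τ b = a := Equiv.swap_apply_right _ _
  let w : Fin k × Fin k → ZMod 2 := fun p => par (x (σ p.1)) * par (x (σ p.2))
  let g : Fin k × Fin k → ZMod 2 := fun p =>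
    if τ p.1 < τ p.2 ∧ σ p.2 < σ p.1 then w p else 0
  let f : Fin k × Fin k → ZMod 2 := fun p =>
    if p.1 < p.2 ∧ σ p.2 < σ p.1 then w p else 0
  have hreindex : crossExpD (σ * τ) x = ∑ p, g p := by
    rw [crossExpD_eq_sum_pairs, ← Equiv.sum_comp (Equiv.prodCongr τ τ)]
    simp [g, w, τ, swapIdx]
  have hdiff : ∑ p, (g p - f p) = w (a, b) := by
    rw [Fintype.sum_eq_add (a, b) (b, a) (by simp [hab.ne])]
    · rcases lt_or_gt_of_ne (σ.injective.ne hab.ne) with hσ | hσ <;>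
        simp [g, f, w, hτa, hτb, hab, hab.not_gt, hσ, hσ.not_gt, mul_comm]
    · rintro p ⟨hpab, hpba⟩
      have hτ : τ p.1 < τ p.2 ↔ p.1 < p.2 := swapIdx_lt_swapIdx_iff h hpab hpba
      simp only [g, f, hτ, sub_self]
  rw [hreindex, crossExpD_eq_sum_pairs, ← sub_eq_iff_eq_add', ← Finset.sum_sub_distrib]
  exact hdiff

end Crossings

section Matrices

variable {n k : ℕ}

lemma comp_swapIdx_involutive {i : ℕ} (h : i + 1 < k) :
    Function.Involutive fun x : Tup n k => x ∘ swapIdx i h := fun x => by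
  funext t; simp [swapIdx]

lemma Smat_mul_apply {i : ℕ} (h : i + 1 < k) (M : Matrix (Tup n k) (Tup n k) ℂ)
    (y x : Tup n k) :
    (Smat n k i h * M) y x
      = sgn (par (y ⟨i, Nat.lt_of_succ_lt h⟩) * par (y ⟨i + 1, h⟩))
        * M (y ∘ swapIdx i h) x := by
  have hinv := comp_swapIdx_involutive (n := n) h
  rw [mul_apply_eq_of_row_eq_zero M (y ∘ swapIdx i h)
    (fun w hw => if_neg fun hy => hw (hinv.eq_iff.1 hy.symm))]
  simp only [Smat]
  rw [if_pos (hinv y).symm, mul_comm (par _)]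
  simp [swapIdx]

lemma Cmat_apply (a : Fin k) (y x : Tup n k) :
    Cmat n k a y x = if y = barAt a x then sgn (parBelow x a + par (x a) + 1) else 0 := rfl

lemma Cmat_mul_apply (a : Fin k) (M : Matrix (Tup n k) (Tup n k) ℂ) (y x : Tup n k) :
    (Cmat n k a * M) y x = sgn (parUpTo y a) * M (barAt a y) x := by
  have hinv := barAt_involutive (n := n) a
  rw [mul_apply_eq_of_row_eq_zero M (barAt a y)
    (fun w hw => by rw [Cmat_apply, if_neg fun hy => hw (hinv.eq_iff.1 hy.symm)])]
  have hsgn : parBelow (barAt a y) a + par (barAt a y a) + 1 = parUpTo y a := by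
    rw [barAt, parBelow_update_of_le y le_rfl, Function.update_self, par_bar, parUpTo,
      add_assoc, add_assoc, CharTwo.add_self_eq_zero, add_zero]
  rw [Cmat_apply, if_pos (hinv y).symm, hsgn]

lemma Dmat_apply (σ : Equiv.Perm (Fin k)) (A : Finset (Fin k)) (y x : Tup n k) :
    Dmat n k (σ, A) y x
      = if y = topLabels σ A x then sgn (crossExpD σ x + ∑ b ∈ A, parUpTo y b) else 0 := by
  have hfactor : ∀ t, (if t ∈ A then (if y t = bar (x (σ t)) then (1 : ℂ) else 0)
      else (if y t = x (σ t) then 1 else 0)) = if y t = topLabels σ A x t then 1 else 0 := by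
    intro t; by_cases ht : t ∈ A <;> simp [topLabels, ht]
  have hlabels : (∀ t ∈ Finset.univ, y t = topLabels σ A x t) ↔ y = topLabels σ A x := by
    simp [funext_iff]
  simp only [Dmat, wtD, hfactor, Finset.prod_boole, hlabels, ite_mul, one_mul, zero_mul]

lemma Dmat_one : Dmat n k (1, ∅) = 1 := by
  ext y x
  simp [Dmat_apply, topLabels_empty, crossExpD_one, sgn_zero, Matrix.one_apply]

lemma Dmat_mul_swapIdx (σ : Equiv.Perm (Fin k)) {i : ℕ} (h : i + 1 < k) :
    Dmat n k (σ * swapIdx i h, ∅) = Smat n k i h * Dmat n k (σ, ∅) := by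
  ext y x
  have hinv := comp_swapIdx_involutive (n := n) h
  have hcond : y = x ∘ ⇑(σ * swapIdx i h) ↔ y ∘ swapIdx i h = x ∘ σ :=
    (hinv.eq_iff (x := y) (y := x ∘ σ)).symm
  rw [Smat_mul_apply, Dmat_apply, Dmat_apply, topLabels_empty, topLabels_empty]
  simp only [hcond]
  split_ifs with hy
  · have hyi : y ⟨i, Nat.lt_of_succ_lt h⟩ = x (σ ⟨i + 1, h⟩) := by
      simpa [swapIdx] using congrFun hy ⟨i + 1, h⟩
    have hyi' : y ⟨i + 1, h⟩ = x (σ ⟨i, Nat.lt_of_succ_lt h⟩) := by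
      simpa [swapIdx] using congrFun hy ⟨i, Nat.lt_of_succ_lt h⟩
    rw [crossExpD_mul_swapIdx, hyi, hyi', Finset.sum_empty, Finset.sum_empty, add_zero, add_zero,
      sgn_add, mul_comm, mul_comm (par _)]
  · rw [mul_zero]

lemma Dmat_insert (σ : Equiv.Perm (Fin k)) {A : Finset (Fin k)} {a : Fin k}
    (hA : ∀ b ∈ A, b < a) : Dmat n k (σ, insert a A) = Cmat n k a * Dmat n k (σ, A) := by
  have ha : a ∉ A := fun h => lt_irrefl a (hA a h)
  ext y x
  rw [Cmat_mul_apply, Dmat_apply, Dmat_apply, topLabels_insert σ ha]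
  simp only [(barAt_involutive a).eq_iff]
  split_ifs
  · have hsum : ∑ b ∈ A, parUpTo (barAt a y) b = ∑ b ∈ A, parUpTo y b :=
      Finset.sum_congr rfl fun b hb => parUpTo_update_of_lt y (hA b hb) _
    rw [Finset.sum_insert ha, hsum, add_left_comm, sgn_add]
  · rw [mul_zero]

end Matrices

lemma asList_insert_of_forall_lt {k : ℕ} {A : Finset (Fin k)} {a : Fin k}
    (hA : ∀ b ∈ A, b < a) : asList (insert a A) = asList A ++ [a] := by
  have ha : a ∉ A := fun h => lt_irrefl a (hA a h)
  have hsorted : (asList A ++ [a]).Pairwise (· ≤ ·) :=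
    List.pairwise_append.2 ⟨Finset.pairwise_sort _ _, List.pairwise_singleton _ a,
      fun b hb c hc => (List.mem_singleton.1 hc) ▸ (hA b ((Finset.mem_sort _).1 hb)).le⟩
  have hnodup : (asList A ++ [a]).Nodup :=
    List.nodup_append.2 ⟨Finset.sort_nodup _ _, List.nodup_singleton a,
      fun b hb c hc => by
        rintro rfl
        exact ha ((Finset.mem_sort _).1 (List.mem_singleton.1 hc ▸ hb))⟩
  refine List.Perm.eq_of_pairwise' (Finset.pairwise_sort _ _) hsorted ?_
  refine (List.perm_ext_iff_of_nodup (Finset.sort_nodup _ _) hnodup).2 fun b => ?_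
  simp [asList, or_comm]

lemma cProd_insert_of_forall_lt {k : ℕ} {A : Finset (Fin k)} {a : Fin k}
    (hA : ∀ b ∈ A, b < a) : cProd (insert a A) = cProd A * cg a := by
  simp [cProd, asList_insert_of_forall_lt hA]

lemma closure_swapIdx_eq_top (k : ℕ) :
    Submonoid.closure {τ : Equiv.Perm (Fin k) | ∃ i h, τ = swapIdx i h} = ⊤ := by
  cases k with
  | zero => exact Subsingleton.elim _ _
  | succ m =>
    rw [eq_top_iff, ← Equiv.Perm.mclosure_swap_castSucc_succ m]
    refine Submonoid.closure_mono ?_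
    rintro _ ⟨i, rfl⟩
    exact ⟨i, Nat.succ_lt_succ i.isLt, rfl⟩

section Action

variable {n k : ℕ} (S : Equiv.Perm (Fin k) →* Ser k)
  (Φ : Ser k →ₐ[ℂ] (Matrix (Tup n k) (Tup n k) ℂ)ᵐᵒᵖ)

lemma op_Dmat_perm (hS : ∀ (i : ℕ) (h : i + 1 < k), S (swapIdx i h) = sg i h)
    (hΦs : ∀ (i : ℕ) (h : i + 1 < k), Φ (sg i h) = MulOpposite.op (Smat n k i h))
    (σ : Equiv.Perm (Fin k)) : MulOpposite.op (Dmat n k (σ, ∅)) = Φ (S σ) := by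
  have hσ : σ ∈ Submonoid.closure {τ | ∃ i h, τ = swapIdx i h} := by
    rw [closure_swapIdx_eq_top]; trivial
  induction hσ using Submonoid.closure_induction_right with
  | one => rw [Dmat_one, map_one, map_one, MulOpposite.op_one]
  | mul_right ρ _ τ hτ ih =>
    obtain ⟨i, h, rfl⟩ := hτ
    rw [Dmat_mul_swapIdx, MulOpposite.op_mul, ih, map_mul, map_mul, hS, hΦs]

lemma op_Dmat (hS : ∀ (i : ℕ) (h : i + 1 < k), S (swapIdx i h) = sg i h)
    (hΦs : ∀ (i : ℕ) (h : i + 1 < k), Φ (sg i h) = MulOpposite.op (Smat n k i h))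
    (hΦc : ∀ j : Fin k, Φ (cg j) = MulOpposite.op (Cmat n k j))
    (x : DDiag k) : MulOpposite.op (Dmat n k x) = Φ (S x.1 * cProd x.2) := by
  obtain ⟨σ, A⟩ := x
  induction A using Finset.induction_on_max with
  | empty => simpa [cProd, asList] using op_Dmat_perm S Φ hS hΦs σ
  | insert a A hA ih =>
    rw [Dmat_insert σ hA, MulOpposite.op_mul, ih, ← hΦc, ← map_mul,
      cProd_insert_of_forall_lt hA, mul_assoc]

end Action

/-- Lemma 2.5: for every `k`-superdiagram `d`, the diagrammatic
action agrees with the Sergeev action under `φ_k`:  `Φ̃_k(d) = Φ_k(φ_k(d))`.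
(`S`, `φ` and `Φ` are characterized by their values on generators/basis diagrams.) -/
theorem diagrammatic_action_eq_sergeev_action (n k : ℕ)
    (S : Equiv.Perm (Fin k) →* Ser k)
    (hS : ∀ (i : ℕ) (h : i + 1 < k), S (swapIdx i h) = sg i h)
    (φ : Dk k →ₗ[ℂ] Ser k)
    (hφ : ∀ x : DDiag k, φ (Finsupp.single x 1) = S x.1 * cProd x.2)
    (Φ : Ser k →ₐ[ℂ] (Matrix (Tup n k) (Tup n k) ℂ)ᵐᵒᵖ)
    (hΦs : ∀ (i : ℕ) (h : i + 1 < k), Φ (sg i h) = MulOpposite.op (Smat n k i h))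
    (hΦc : ∀ j : Fin k, Φ (cg j) = MulOpposite.op (Cmat n k j)) :
    ∀ d : Dk k, MulOpposite.op (tildePhi n k d) = Φ (φ d) := by
  -- `tildePhi n k` is definitionally `Finsupp.linearCombination ℂ (Dmat n k)`.
  suffices h : (MulOpposite.opLinearEquiv ℂ).toLinearMap ∘ₗ
      Finsupp.linearCombination ℂ (Dmat n k) = Φ.toLinearMap ∘ₗ φ from
    fun d => LinearMap.congr_fun h d
  refine Finsupp.lhom_ext fun x a => ?_
  have hsingle : Finsupp.single x a = a • Finsupp.single x 1 := by simp
  simp only [LinearMap.coe_comp, Function.comp_apply, LinearEquiv.coe_coe,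
    MulOpposite.coe_opLinearEquiv, Finsupp.linearCombination_single, AlgHom.toLinearMap_apply]
  rw [hsingle, map_smul, hφ, map_smul, ← op_Dmat S Φ hS hΦs hΦc x, MulOpposite.op_smul]

end SergeevSW
end
end

section
/- Let d be an (r,s)-superdiagram, let a_1 < ... < a_p be the left vertices of the marked horizontal edges on the bottom row of d, let b_1 < ... < b_q be the positions obtained by reading the top vertices of the marked vertical edges together with the left vertices of the marked horizontal edges on the top row of d from left to right, and let d' be the (r,s)-superdiagram obtained from d by forgetting all marks. Then in End_C(V^{⊗r} ⊗ W^{⊗s})^{op} one has Ψ_{r,s}(d) = Ψ_{r,s}(c_{a_1})···Ψ_{r,s}(c_{a_p}) Ψ_{r,s}(d') Ψ_{r,s}(c_{b_1})···Ψ_{r,s}(c_{b_q}). -/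
/-!
STATEMENT 4: decomposition of the action of an `(r,s)`-superdiagram into the
actions of the marked-edge diagrams `c_i` and of the underlying unmarked diagram.
-/

noncomputable section

namespace WalledBS

/-- Index set `{1,…,n,1̄,…,n̄}` of the standard basis of `V = ℂ^{n|n}`. -/
abbrev BI (n : ℕ) := Fin n ⊕ Fin n

/-- parity of a basis index -/
def par {n : ℕ} : BI n → ZMod 2
  | Sum.inl _ => 0
  | Sum.inr _ => 1

/-- bar involution on indices -/
def bar {n : ℕ} : BI n → BI n
  | Sum.inl i => Sum.inr i
  | Sum.inr i => Sum.inl i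

/-- `(-1)^z` for `z : ℤ/2ℤ` -/
def sgn (z : ZMod 2) : ℂ := (-1 : ℂ) ^ z.val

/-- Index tuples for the standard basis of the mixed tensor space
`V^{⊗r} ⊗ W^{⊗s}` (positions `< r` index `V`-factors, positions `≥ r` index
`W`-factors). -/
abbrev Tup (n k : ℕ) := Fin k → BI n

/-- total parity of a basis tuple -/
def parT {n k : ℕ} (x : Tup n k) : ZMod 2 := ∑ p, par (x p)

/-- sum of parities of the entries strictly before position `p` -/
def parBelow {n k : ℕ} (x : Tup n k) (p : Fin k) : ZMod 2 :=
  ∑ q ∈ Finset.univ.filter (fun q => q < p), par (x q)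

/-- sum of parities of the entries at positions `≤ p` -/
def parUpTo {n k : ℕ} (x : Tup n k) (p : Fin k) : ZMod 2 := parBelow x p + par (x p)

/-- The queer Lie superalgebra `q(n)` in block matrix form `((A,B),(B,A))`. -/
def qn (n : ℕ) : Set (Matrix (BI n) (BI n) ℂ) :=
  {M | ∀ i j : Fin n,
    M (Sum.inl i) (Sum.inl j) = M (Sum.inr i) (Sum.inr j) ∧
    M (Sum.inl i) (Sum.inr j) = M (Sum.inr i) (Sum.inl j)}

/-- a matrix is homogeneous of parity `p` -/
def IsHomog {ι : Type} (pr : ι → ZMod 2) (p : ZMod 2) (M : Matrix ι ι ℂ) : Prop :=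
  ∀ i j, M i j ≠ 0 → pr i = pr j + p

/-- homogeneous component of parity `p` of a matrix -/
def matComp {ι : Type} (pr : ι → ZMod 2) (p : ZMod 2) (M : Matrix ι ι ℂ) :
    Matrix ι ι ℂ :=
  fun i j => if pr i = pr j + p then M i j else 0

/-- An `(r,s)`-superdiagram: a perfect matching `π` (an involution without fixed
points) of the `2(r+s)` vertices (`true` = top row, `false` = bottom row; wall
between positions `r-1` and `r`, 0-based), such that an edge joins two vertices in
the same row iff it crosses the wall, together with a marking `mk` of the edges. -/
structure WDiag (r s : ℕ) where
  π : Bool × Fin (r + s) → Bool × Fin (r + s)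
  invol : ∀ v, π (π v) = v
  nofix : ∀ v, π v ≠ v
  wall : ∀ v, ((π v).1 = v.1) ↔ ¬(((π v).2.val < r) ↔ (v.2.val < r))
  mrk : Bool × Fin (r + s) → Bool
  mkE : ∀ v, mrk (π v) = mrk v

/-- the label of a vertex in a labeled diagram (`i` = bottom labels, `j` = top labels) -/
def lab {n r s : ℕ} (i j : Tup n (r + s)) (v : Bool × Fin (r + s)) : BI n :=
  if v.1 then j v.2 else i v.2

/-- the good vertex of each edge: the left vertex of a horizontal edge, the top
vertex of a vertical edge.  `isGoodW d v` holds iff `v` is the good vertex of its edge. -/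
def isGoodW {r s : ℕ} (d : WDiag r s) (v : Bool × Fin (r + s)) : Bool :=
  if (d.π v).1 = v.1 then decide (v.2 < (d.π v).2) else v.1

/-- parity of an edge (with good vertex `v`) in a labeled diagram: the parity of the
label at the bottom vertex (vertical edge), resp. at the right vertex (horizontal). -/
def parE {n r s : ℕ} (d : WDiag r s) (i j : Tup n (r + s))
    (v : Bool × Fin (r + s)) : ZMod 2 :=
  par (lab i j (d.π v))

/-- whether the two edges with good vertices `g1 ≠ g2` cross each other (drawn with
straight vertical edges and horizontal arcs near their row). -/
def crossB {r s : ℕ} (d : WDiag r s) (g1 g2 : Bool × Fin (r + s)) : Bool :=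
  let h1 := d.π g1
  let h2 := d.π g2
  if h1.1 = g1.1 then
    if h2.1 = g2.1 then
      decide (g1.1 = g2.1) &&
        (decide (g1.2 < g2.2 ∧ g2.2 < h1.2 ∧ h1.2 < h2.2) ||
         decide (g2.2 < g1.2 ∧ g1.2 < h2.2 ∧ h2.2 < h1.2))
    else
      let e := if g1.1 then g2.2 else h2.2
      decide (g1.2 < e ∧ e < h1.2)
  else
    if h2.1 = g2.1 then
      let e := if g2.1 then g1.2 else h1.2
      decide (g2.2 < e ∧ e < h2.2)
    else
      decide ((g1.2 < g2.2 ∧ h2.2 < h1.2) ∨ (g2.2 < g1.2 ∧ h1.2 < h2.2))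

/-- a linear order key on vertices (bottom row first, left to right) -/
def vKey {r s : ℕ} (v : Bool × Fin (r + s)) : ℕ :=
  (if v.1 then r + s else 0) + v.2.val

/-- crossing sign exponent `Σ_c |e_1||e_2|` of a labeled `(r,s)`-superdiagram -/
def crossExpW {n r s : ℕ} (d : WDiag r s) (i j : Tup n (r + s)) : ZMod 2 :=
  ∑ g2 ∈ Finset.univ.filter (fun v => isGoodW d v),
    ∑ g1 ∈ Finset.univ.filter (fun v => isGoodW d v ∧ vKey v < vKey g2),
      if crossB d g1 g2 then parE d i j g1 * parE d i j g2 else 0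

/-- the sign exponent `Σ_h |h|` over bottom-row horizontal edges (`|h|` = parity of
the label at the right vertex) -/
def hExpW {n r s : ℕ} (d : WDiag r s) (i : Tup n (r + s)) : ZMod 2 :=
  ∑ g ∈ Finset.univ.filter (fun v : Bool × Fin (r + s) =>
      isGoodW d v ∧ v.1 = false ∧ (d.π v).1 = false),
    par (i (d.π g).2)

/-- left vertices (positions, in increasing order) of the marked horizontal edges on
the bottom row -/
def botList {r s : ℕ} (d : WDiag r s) : List (Fin (r + s)) :=
  (List.finRange (r + s)).filter (fun p =>
    decide ((d.π (false, p)).1 = false) && decide (p < (d.π (false, p)).2)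
      && d.mrk (false, p))

/-- the exponent `Σ_i m(e_i)` over the marked horizontal edges on the bottom row:
`m(e_i) = i + |i_1| + ⋯ + |i_{a_i}|` for the `i`-th such edge with left vertex `a_i` -/
def botExpW {n r s : ℕ} (d : WDiag r s) (i : Tup n (r + s)) : ZMod 2 :=
  (((botList d).length * ((botList d).length + 1) / 2 : ℕ) : ZMod 2) +
    ((botList d).map (fun a => parUpTo i a)).sum

/-- positions (in increasing order) of the top vertices of the marked vertical edges
together with the left vertices of the marked horizontal edges on the top row -/
def topList {r s : ℕ} (d : WDiag r s) : List (Fin (r + s)) :=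
  (List.finRange (r + s)).filter (fun p =>
    d.mrk (true, p) &&
      (decide ((d.π (true, p)).1 = false) || decide (p < (d.π (true, p)).2)))

/-- the exponent `Σ_i m(ẽ_i)` over the marked edges read along the top row:
`m(ẽ) = |j_1|+⋯+|j_b|` if `b ≤ r` and `|j_1|+⋯+|j_{b-1}|` if `b > r` (1-based). -/
def topExpW {n r s : ℕ} (d : WDiag r s) (j : Tup n (r + s)) : ZMod 2 :=
  ((topList d).map (fun b => if b.val < r then parUpTo j b else parBelow j b)).sum

/-- weight `wt(ᵢd_ⱼ)` of a labeled `(r,s)`-superdiagram: product of Kronecker deltas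
over the edges (with bar for marked edges), the signs over bottom-row horizontal
edges, the crossing signs and the marked-edge signs. -/
def wtW {n r s : ℕ} (d : WDiag r s) (i j : Tup n (r + s)) : ℂ :=
  (∏ g ∈ Finset.univ.filter (fun v => isGoodW d v),
    (if d.mrk g then (if lab i j (d.π g) = bar (lab i j g) then (1 : ℂ) else 0)
     else (if lab i j (d.π g) = lab i j g then (1 : ℂ) else 0)))
  * sgn (hExpW d i + crossExpW d i j + botExpW d i + topExpW d j)

/-- matrix (in the standard basis of the mixed tensor space) of the right action of
an `(r,s)`-superdiagram: `v_{i^L} ⊗ w_{i^R} ↦ Σ_j wt(ᵢd_ⱼ) v_{j^L} ⊗ w_{j^R}` -/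
def PsiMat (n : ℕ) {r s : ℕ} (d : WDiag r s) :
    Matrix (Tup n (r + s)) (Tup n (r + s)) ℂ :=
  fun jj ii => wtW d ii jj

/-- the superspace `B_{r,s}` with basis the `(r,s)`-superdiagrams -/
abbrev WB (r s : ℕ) := WDiag r s →₀ ℂ

/-- the linear map `Ψ_{r,s} : B_{r,s} → End_ℂ(V^{⊗r} ⊗ W^{⊗s})` -/
noncomputable def PsiFun (n r s : ℕ) (f : WB r s) :
    Matrix (Tup n (r + s)) (Tup n (r + s)) ℂ :=
  f.sum fun d a => a • PsiMat n d

/-- The action of `q(n)` on the mixed tensor space `V^{⊗r} ⊗ W^{⊗s}` (diagonal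
action with Koszul signs; on the `W`-factors through the antipode). -/
def rhoM (n r s : ℕ) (M : Matrix (BI n) (BI n) ℂ) :
    Matrix (Tup n (r + s)) (Tup n (r + s)) ℂ :=
  fun y x => ∑ p : Fin (r + s),
    if ∀ q, q ≠ p → x q = y q then
      sgn ((par (x p) + par (y p)) * parBelow x p) *
        (if p.val < r then M (y p) (x p)
         else -(sgn ((par (y p) + par (x p)) * par (x p)) * M (x p) (y p)))
    else 0

/-- the supercentralizer `End_{q(n)}(V^{⊗r} ⊗ W^{⊗s})` -/
def SCM (n r s : ℕ) : Set (Matrix (Tup n (r + s)) (Tup n (r + s)) ℂ) :=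
  {f | ∀ M ∈ qn n, ∀ pg : ZMod 2, IsHomog par pg M → ∀ pf : ZMod 2,
    matComp parT pf f * rhoM n r s M = sgn (pf * pg) • (rhoM n r s M * matComp parT pf f)}

/-- the `(r,s)`-superdiagram `c_a`: all vertical normal edges, except that the
`a`-th vertical edge is marked -/
def cDiagW (r s : ℕ) (a : Fin (r + s)) : WDiag r s where
  π := fun v => (!v.1, v.2)
  invol := by intro v; simp
  nofix := by intro v; simp [Prod.ext_iff]
  wall := by intro v; simp
  mrk := fun v => decide (v.2 = a)
  mkE := by intro v; rfl

/-- forget all marks of a superdiagram -/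
def unmarkD {r s : ℕ} (d : WDiag r s) : WDiag r s :=
  { d with mrk := fun _ => false, mkE := fun _ => rfl }

/-!
`Ψ(c_a)` is a signed permutation matrix: it bars the `a`-th label of a basis tuple and
contributes the sign `(-1)^{m}` of a single marked vertical edge. Multiplying `Ψ(d')` by the
`Ψ(c_a)` on one side and the `Ψ(c_b)` on the other therefore bars the labels of `Ψ(d')` at
the good vertices of the marked edges of `d`, which turns each unmarked Kronecker condition
into the marked one, and accumulates the marked-edge signs. On the bottom row every bar
also flips the partial parities `|i_1| + ⋯ + |i_{a'}|` read by the later factors `c_{a'}`,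
`a < a'`; this is the source of the triangular term `p(p+1)/2` in `botExpW`.
-/

lemma sgn_add (x y : ZMod 2) : sgn (x + y) = sgn x * sgn y := by
  rw [sgn, ZMod.val_add, ← neg_one_pow_eq_pow_mod_two, pow_add]
  rfl

lemma bar_bar {n : ℕ} (i : BI n) : bar (bar i) = i := by
  cases i <;> rfl

lemma par_bar {n : ℕ} (i : BI n) : par (bar i) = par i + 1 := by
  cases i <;> rfl

section Tuples

variable {n k : ℕ}

def barAt (a : Fin k) (x : Tup n k) : Tup n k :=
  Function.update x a (bar (x a))

def barOn (L : List (Fin k)) (x : Tup n k) : Tup n k :=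
  fun p => if p ∈ L then bar (x p) else x p

lemma barAt_apply (a p : Fin k) (x : Tup n k) :
    barAt a x p = if p = a then bar (x a) else x p :=
  Function.update_apply ..

lemma barAt_barAt (a : Fin k) (x : Tup n k) : barAt a (barAt a x) = x := by
  funext p
  rcases eq_or_ne p a with rfl | h <;> simp [barAt_apply, bar_bar, *]

lemma eq_barAt_comm {a : Fin k} {x y : Tup n k} : x = barAt a y ↔ y = barAt a x := by
  constructor <;> rintro rfl <;> rw [barAt_barAt]

@[simp]
lemma barOn_nil (x : Tup n k) : barOn [] x = x :=
  funext fun _ => if_neg List.not_mem_nil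

lemma barOn_singleton (a : Fin k) (x : Tup n k) : barOn [a] x = barAt a x := by
  funext p
  rcases eq_or_ne p a with rfl | h <;> simp [barOn, barAt_apply, *]

lemma barAt_barOn {a : Fin k} {L : List (Fin k)} (ha : a ∉ L) (x : Tup n k) :
    barAt a (barOn L x) = barOn (a :: L) x := by
  funext p
  rcases eq_or_ne p a with rfl | h
  · simp [barAt_apply, barOn, ha]
  · simp [barAt_apply, barOn, h]

lemma barOn_barAt {a : Fin k} {L : List (Fin k)} (ha : a ∉ L) (x : Tup n k) :
    barOn L (barAt a x) = barOn (a :: L) x := by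
  funext p
  rcases eq_or_ne p a with rfl | h
  · simp [barAt_apply, barOn, ha]
  · simp [barAt_apply, barOn, h]

lemma parBelow_congr {x y : Tup n k} {c : Fin k} (h : ∀ q < c, x q = y q) :
    parBelow x c = parBelow y c :=
  Finset.sum_congr rfl fun q hq => by rw [h q (Finset.mem_filter.mp hq).2]

lemma parUpTo_congr {x y : Tup n k} {c : Fin k} (h : ∀ q ≤ c, x q = y q) :
    parUpTo x c = parUpTo y c := by
  rw [parUpTo, parUpTo, parBelow_congr fun q hq => h q hq.le, h c le_rfl]

lemma barOn_of_notMem {L : List (Fin k)} {p : Fin k} (hp : p ∉ L) (x : Tup n k) :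
    barOn L x p = x p :=
  if_neg hp

lemma sum_par_barAt {q : Fin k} {S : Finset (Fin k)} (hq : q ∈ S) (x : Tup n k) :
    ∑ p ∈ S, par (barAt q x p) = ∑ p ∈ S, par (x p) + 1 := by
  have hrest : ∑ p ∈ S.erase q, par (barAt q x p) = ∑ p ∈ S.erase q, par (x p) :=
    Finset.sum_congr rfl fun p hp => by rw [barAt_apply, if_neg (Finset.ne_of_mem_erase hp)]
  rw [← Finset.add_sum_erase S _ hq, ← Finset.add_sum_erase S _ hq, hrest, barAt_apply,
    if_pos rfl, par_bar]
  ring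

lemma parBelow_barAt_of_lt {q c : Fin k} (h : q < c) (x : Tup n k) :
    parBelow (barAt q x) c = parBelow x c + 1 :=
  sum_par_barAt (Finset.mem_filter.mpr ⟨Finset.mem_univ q, h⟩) x

lemma parUpTo_barAt_of_le {q c : Fin k} (h : q ≤ c) (x : Tup n k) :
    parUpTo (barAt q x) c = parUpTo x c + 1 := by
  rcases h.lt_or_eq with h | rfl
  · rw [parUpTo, parUpTo, parBelow_barAt_of_lt h, barAt_apply, if_neg h.ne']
    ring
  · rw [parUpTo, parUpTo, parBelow_congr fun p hp => by rw [barAt_apply, if_neg hp.ne],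
      barAt_apply, if_pos rfl, par_bar]
    ring

/-- The exponent `m(ẽ)` of the marked edge read at top position `b`, as in `topExpW`. -/
def topMarkExp (r : ℕ) (x : Tup n k) (b : Fin k) : ZMod 2 :=
  if b.val < r then parUpTo x b else parBelow x b

lemma topMarkExp_congr {r : ℕ} {x y : Tup n k} {b : Fin k} (h : ∀ q ≤ b, x q = y q) :
    topMarkExp r x b = topMarkExp r y b := by
  unfold topMarkExp
  split
  · exact parUpTo_congr h
  · exact parBelow_congr fun q hq => h q hq.le

end Tuples

section Diagrams

variable {n r s : ℕ}

lemma isGoodW_iff_bot (d : WDiag r s) (p : Fin (r + s)) :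
    isGoodW d (false, p) = true ↔ (d.π (false, p)).1 = false ∧ p < (d.π (false, p)).2 := by
  cases hb : (d.π (false, p)).1 <;> simp [isGoodW, hb]

lemma isGoodW_iff_top (d : WDiag r s) (p : Fin (r + s)) :
    isGoodW d (true, p) = true ↔ (d.π (true, p)).1 = false ∨ p < (d.π (true, p)).2 := by
  cases hb : (d.π (true, p)).1 <;> simp [isGoodW, hb]

lemma mem_botList_iff (d : WDiag r s) {p : Fin (r + s)} :
    p ∈ botList d ↔ isGoodW d (false, p) = true ∧ d.mrk (false, p) = true := by
  simp [botList, isGoodW_iff_bot, and_assoc]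

lemma mem_topList_iff (d : WDiag r s) {p : Fin (r + s)} :
    p ∈ topList d ↔ isGoodW d (true, p) = true ∧ d.mrk (true, p) = true := by
  simp [topList, isGoodW_iff_top, and_comm]

lemma botList_sorted (d : WDiag r s) : (botList d).Pairwise (· < ·) :=
  (List.pairwise_lt_finRange _).filter _

lemma topList_sorted (d : WDiag r s) : (topList d).Pairwise (· < ·) :=
  (List.pairwise_lt_finRange _).filter _

/-- A horizontal edge crosses the wall, so its left vertex lies left of it. -/
lemma lt_of_mem_botList (d : WDiag r s) {p : Fin (r + s)} (hp : p ∈ botList d) : p.val < r := by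
  obtain ⟨hrow, hlt : p.val < (d.π (false, p)).2.val⟩ :=
    (isGoodW_iff_bot d p).mp ((mem_botList_iff d).mp hp).1
  have hwall : ¬((d.π (false, p)).2.val < r ↔ p.val < r) := (d.wall (false, p)).mp hrow
  by_contra
  exact hwall ⟨fun _ => by omega, fun _ => by omega⟩

lemma isGoodW_π_of_isGoodW (d : WDiag r s) {g : Bool × Fin (r + s)}
    (h : isGoodW d g = true) : isGoodW d (d.π g) = false := by
  have hinv := d.invol g
  unfold isGoodW at h ⊢
  rw [hinv]
  by_cases hrow : (d.π g).1 = g.1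
  · rw [if_pos hrow] at h
    rw [if_pos hrow.symm]
    simpa using (lt_asymm (of_decide_eq_true h))
  · rw [if_neg hrow] at h
    rw [if_neg (Ne.symm hrow)]
    cases hb : (d.π g).1 <;> simp_all

lemma botList_unmarkD (d : WDiag r s) : botList (unmarkD d) = [] := by
  simp [botList, unmarkD]

lemma topList_unmarkD (d : WDiag r s) : topList (unmarkD d) = [] := by
  simp [topList, unmarkD]

lemma lab_barOn (d : WDiag r s) (ii jj : Tup n (r + s)) (v : Bool × Fin (r + s)) :
    lab (barOn (botList d) ii) (barOn (topList d) jj) v =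
      if isGoodW d v = true ∧ d.mrk v = true then bar (lab ii jj v) else lab ii jj v := by
  rcases v with ⟨_ | _, p⟩ <;> simp [lab, barOn, mem_botList_iff, mem_topList_iff]

lemma lab_barOn_π (d : WDiag r s) (ii jj : Tup n (r + s)) {g : Bool × Fin (r + s)}
    (hg : isGoodW d g = true) :
    lab (barOn (botList d) ii) (barOn (topList d) jj) (d.π g) = lab ii jj (d.π g) := by
  simp [lab_barOn, isGoodW_π_of_isGoodW d hg]

/-- A marked edge with good vertex `v` imposes `lab (π v) = bar (lab v)`, which becomes the
condition of an unmarked edge once the label at `v` is barred; the remaining signs only read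
labels at vertices that are not good, which barring leaves alone. -/
lemma wtW_eq_sgn_mul_wtW_unmarkD (d : WDiag r s) (ii jj : Tup n (r + s)) :
    wtW d ii jj = sgn (botExpW d ii + topExpW d jj) *
      wtW (unmarkD d) (barOn (botList d) ii) (barOn (topList d) jj) := by
  set iB := barOn (botList d) ii
  set jB := barOn (topList d) jj
  have hdelta : ∀ g ∈ Finset.univ.filter (fun v => isGoodW (unmarkD d) v),
      (if (unmarkD d).mrk g then
        (if lab iB jB ((unmarkD d).π g) = bar (lab iB jB g) then (1 : ℂ) else 0)
       else (if lab iB jB ((unmarkD d).π g) = lab iB jB g then 1 else 0)) =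
        if d.mrk g then (if lab ii jj (d.π g) = bar (lab ii jj g) then 1 else 0)
        else (if lab ii jj (d.π g) = lab ii jj g then 1 else 0) := by
    intro g hg
    have hgood : isGoodW d g = true := (Finset.mem_filter.mp hg).2
    change (if lab iB jB (d.π g) = lab iB jB g then (1 : ℂ) else 0) = _
    rw [lab_barOn_π d ii jj hgood, lab_barOn]
    cases d.mrk g <;> simp [hgood]
  have hH : hExpW (unmarkD d) iB = hExpW d ii := by
    refine Finset.sum_congr rfl fun g hg => ?_
    obtain ⟨hgood, -, hbot⟩ := (Finset.mem_filter.mp hg).2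
    have hlab : ∀ x y : Tup n (r + s), lab x y (d.π g) = x (d.π g).2 := by
      simp [lab, show (d.π g).1 = false from hbot]
    have := lab_barOn_π d ii jj hgood
    rw [hlab, hlab] at this
    exact congrArg par this
  have hpar : ∀ g, isGoodW d g = true → parE (unmarkD d) iB jB g = parE d ii jj g :=
    fun g hg => congrArg par (lab_barOn_π d ii jj hg)
  have hC : crossExpW (unmarkD d) iB jB = crossExpW d ii jj := by
    refine Finset.sum_congr rfl fun g₂ hg₂ => Finset.sum_congr rfl fun g₁ hg₁ => ?_
    rw [hpar g₁ (Finset.mem_filter.mp hg₁).2.1, hpar g₂ (Finset.mem_filter.mp hg₂).2]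
    rfl
  have hB : botExpW (unmarkD d) iB = 0 := by simp [botExpW, botList_unmarkD]
  have hT : topExpW (unmarkD d) jB = 0 := by simp [topExpW, topList_unmarkD]
  have hgood : isGoodW (unmarkD d) = isGoodW d := rfl
  unfold wtW
  rw [Finset.prod_congr rfl hdelta, hgood, hH, hC, hB, hT, add_zero, add_zero]
  simp only [sgn_add]
  ring

end Diagrams

section MarkedIdentity

variable {n r s : ℕ}

lemma botList_cDiagW (a : Fin (r + s)) : botList (cDiagW r s a) = [] := by
  simp [botList, cDiagW]

lemma topList_cDiagW (a : Fin (r + s)) : topList (cDiagW r s a) = [a] := by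
  simp [topList, cDiagW, List.filter_eq, List.count_finRange]

lemma isGoodW_cDiagW (a : Fin (r + s)) (v : Bool × Fin (r + s)) :
    isGoodW (cDiagW r s a) v = v.1 := by
  simp [isGoodW, cDiagW]

lemma wtW_unmarkD_cDiagW (a : Fin (r + s)) (x y : Tup n (r + s)) :
    wtW (unmarkD (cDiagW r s a)) x y = if x = y then 1 else 0 := by
  have hgood : isGoodW (unmarkD (cDiagW r s a)) = Prod.fst := funext (isGoodW_cDiagW a)
  have hH : hExpW (unmarkD (cDiagW r s a)) x = 0 :=
    Finset.sum_eq_zero fun v hv => by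
      obtain ⟨htop, hbot, -⟩ := (Finset.mem_filter.mp hv).2
      rw [hgood] at htop
      simp [htop] at hbot
  have hC : crossExpW (unmarkD (cDiagW r s a)) x y = 0 := by
    refine Finset.sum_eq_zero fun g₂ _ => Finset.sum_eq_zero fun g₁ _ => ?_
    have : crossB (unmarkD (cDiagW r s a)) g₁ g₂ = false := by
      simp only [crossB, unmarkD, cDiagW, Bool.not_ne_self, if_false]
      exact decide_eq_false (by rintro (⟨h, h'⟩ | ⟨h, h'⟩) <;> exact lt_asymm h h')
    simp [this]
  have hB : botExpW (unmarkD (cDiagW r s a)) x = 0 := by simp [botExpW, botList_unmarkD]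
  have hT : topExpW (unmarkD (cDiagW r s a)) y = 0 := by simp [topExpW, topList_unmarkD]
  unfold wtW
  rw [hH, hC, hB, hT, hgood, Finset.prod_filter, Fintype.prod_prod_type]
  simp [unmarkD, cDiagW, lab, sgn, Finset.prod_boole, funext_iff]

lemma PsiMat_cDiagW_apply (a : Fin (r + s)) (kk ii : Tup n (r + s)) :
    PsiMat n (cDiagW r s a) kk ii = if kk = barAt a ii then sgn (topMarkExp r kk a) else 0 := by
  have hB : botExpW (cDiagW r s a) ii = 0 := by simp [botExpW, botList_cDiagW]
  have hT : topExpW (cDiagW r s a) kk = topMarkExp r kk a := by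
    simp [topExpW, topList_cDiagW, topMarkExp]
  rw [PsiMat, wtW_eq_sgn_mul_wtW_unmarkD, hB, hT, zero_add, botList_cDiagW, topList_cDiagW,
    wtW_unmarkD_cDiagW, barOn_nil, barOn_singleton]
  simp only [eq_barAt_comm, mul_ite, mul_one, mul_zero]

lemma mul_PsiMat_cDiagW_apply (X : Matrix (Tup n (r + s)) (Tup n (r + s)) ℂ) (a : Fin (r + s))
    (jj ii : Tup n (r + s)) :
    (X * PsiMat n (cDiagW r s a)) jj ii =
      sgn (topMarkExp r (barAt a ii) a) * X jj (barAt a ii) := by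
  rw [Matrix.mul_apply]
  simp only [PsiMat_cDiagW_apply, mul_ite, mul_zero, Finset.sum_ite_eq', Finset.mem_univ, if_true]
  ring

lemma PsiMat_cDiagW_mul_apply (X : Matrix (Tup n (r + s)) (Tup n (r + s)) ℂ) (b : Fin (r + s))
    (jj ii : Tup n (r + s)) :
    (PsiMat n (cDiagW r s b) * X) jj ii = sgn (topMarkExp r jj b) * X (barAt b jj) ii := by
  rw [Matrix.mul_apply]
  simp only [PsiMat_cDiagW_apply, eq_barAt_comm (x := jj), ite_mul, zero_mul, Finset.sum_ite_eq',
    Finset.mem_univ, if_true]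

end MarkedIdentity

section Products

open MulOpposite

variable {n r s : ℕ}

lemma unop_op_mul_prod_cDiagW (X : Matrix (Tup n (r + s)) (Tup n (r + s)) ℂ)
    {L : List (Fin (r + s))} (hL : L.Pairwise (· < ·)) (jj ii : Tup n (r + s)) :
    (op X * (L.map fun b => op (PsiMat n (cDiagW r s b))).prod).unop jj ii =
      sgn (L.map (topMarkExp r jj)).sum * X (barOn L jj) ii := by
  induction L generalizing X with
  | nil => simp [sgn]
  | cons b L ih =>
    obtain ⟨hb, hL⟩ := List.pairwise_cons.mp hL
    have hbL : b ∉ L := fun h => lt_irrefl b (hb b h)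
    have hsign : topMarkExp r (barOn L jj) b = topMarkExp r jj b :=
      topMarkExp_congr fun q hq => barOn_of_notMem (fun h => (hb q h).not_ge hq) jj
    rw [List.map_cons, List.prod_cons, ← mul_assoc, ← op_mul, ih _ hL, PsiMat_cDiagW_mul_apply,
      hsign, barAt_barOn hbL, List.map_cons, List.sum_cons, sgn_add]
    ring

lemma unop_prod_cDiagW_mul_op (X : Matrix (Tup n (r + s)) (Tup n (r + s)) ℂ)
    {L : List (Fin (r + s))} (hL : L.Pairwise (· < ·)) (hr : ∀ a ∈ L, a.val < r)
    (jj ii : Tup n (r + s)) :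
    ((L.map fun a => op (PsiMat n (cDiagW r s a))).prod * op X).unop jj ii =
      sgn (((L.length * (L.length + 1) / 2 : ℕ) : ZMod 2) + (L.map (parUpTo ii)).sum) *
        X jj (barOn L ii) := by
  induction L generalizing ii with
  | nil => simp [sgn]
  | cons a L ih =>
    obtain ⟨ha, hL⟩ := List.pairwise_cons.mp hL
    have haL : a ∉ L := fun h => lt_irrefl a (ha a h)
    have hself : topMarkExp r (barAt a ii) a = parUpTo ii a + 1 := by
      rw [topMarkExp, if_pos (hr a List.mem_cons_self), parUpTo_barAt_of_le le_rfl]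
    have hshift : (L.map (parUpTo (barAt a ii))).sum = (L.map (parUpTo ii)).sum + L.length := by
      rw [List.map_congr_left fun c hc => parUpTo_barAt_of_le (ha c hc).le ii]
      simp [List.sum_map_add]
    have htri : (L.length + 1) * (L.length + 1 + 1) / 2 =
        L.length * (L.length + 1) / 2 + (L.length + 1) := by
      rw [show (L.length + 1) * (L.length + 1 + 1) = L.length * (L.length + 1) + (L.length + 1) * 2
        by ring, Nat.add_mul_div_right _ _ two_pos]
    rw [List.map_cons, List.prod_cons, mul_assoc, unop_mul, unop_op, mul_PsiMat_cDiagW_apply,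
      ih hL (fun c hc => hr c (List.mem_cons_of_mem a hc)), barOn_barAt haL, hself, hshift,
      ← mul_assoc, ← sgn_add, List.length_cons, htri, List.map_cons, List.sum_cons]
    congr 2
    push_cast
    ring

end Products

/-- Lemma 3.2: for an `(r,s)`-superdiagram `d` with bottom-row marked
horizontal left vertices `a_1 < ⋯ < a_p`, top-row marked good vertices
`b_1 < ⋯ < b_q`, and underlying unmarked diagram `d'`, one has, in
`End_ℂ(V^{⊗r} ⊗ W^{⊗s})^{op}`,
`Ψ(d) = Ψ(c_{a_1}) ⋯ Ψ(c_{a_p}) Ψ(d') Ψ(c_{b_1}) ⋯ Ψ(c_{b_q})`. -/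
theorem Psi_decomposition (n r s : ℕ) (d : WDiag r s) :
    MulOpposite.op (PsiMat n d) =
      (((botList d).map (fun a => MulOpposite.op (PsiMat n (cDiagW r s a)))).prod) *
        MulOpposite.op (PsiMat n (unmarkD d)) *
        (((topList d).map (fun b => MulOpposite.op (PsiMat n (cDiagW r s b)))).prod) := by
  apply MulOpposite.unop_injective
  ext jj ii
  rw [mul_assoc, ← MulOpposite.op_unop (MulOpposite.op (PsiMat n (unmarkD d)) * _),
    unop_prod_cDiagW_mul_op _ (botList_sorted d) (fun _ => lt_of_mem_botList d),
    unop_op_mul_prod_cDiagW _ (topList_sorted d), MulOpposite.unop_op, PsiMat, PsiMat,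
    wtW_eq_sgn_mul_wtW_unmarkD, sgn_add, mul_assoc]
  rfl

end WalledBS
end
end

section
/- Let A be an associative C-algebra containing elements s_{r-1}, s_{r+1}, e satisfying s_{r-1}^2 = 1, s_{r+1}^2 = 1, s_{r-1} s_{r+1} = s_{r+1} s_{r-1}, e = e s_{r-1} e = e s_{r+1} e, and s_{r-1} s_{r+1} e s_{r+1} s_{r-1} e = e s_{r-1} s_{r+1} e s_{r+1} s_{r-1}. Then s_{r-1} s_{r+1} e s_{r+1} s_{r-1} e = e s_{r-1} s_{r+1} e. -/
/-!
Write `c = s₁ s₂` and `y = e c e`; since `s₂ s₁ = c`, the last relation says that `c` commutes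
with `y`. The relations `e = e sᵢ e` make `y` absorb `e sᵢ` on the left, so
`c y = y c = e s₁ y c = e s₁ c y = e s₂ y = y`, using `s₁ c = s₂`.
-/

theorem mul_mul_eq_self_of_commute {M : Type*} [Monoid M] {s t e x : M} (hs : s ^ 2 = 1)
    (hse : e = e * s * e) (hte : e = e * t * e) (hcomm : Commute (s * t) (e * x)) :
    s * t * (e * x) = e * x := by
  have absorb : ∀ a, e = e * a * e → e * a * (e * x) = e * x := fun a h => by
    rw [← mul_assoc, ← h]
  calc s * t * (e * x) = e * x * (s * t) := hcomm.eq
    _ = e * s * (e * x) * (s * t) := by rw [absorb s hse]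
    _ = e * s * (s * t * (e * x)) := by rw [mul_assoc, hcomm.eq]
    _ = e * t * (e * x) := by simp only [← mul_assoc, mul_assoc e s s, ← sq, hs, mul_one]
    _ = e * x := absorb t hte

theorem walledBrauer_relation_consequence_general
    (A : Type*) [Ring A] (s₁ s₂ e : A)
    (h1 : s₁ ^ 2 = 1)
    (h3 : s₁ * s₂ = s₂ * s₁)
    (h4 : e = e * s₁ * e) (h5 : e = e * s₂ * e)
    (h6 : s₁ * s₂ * e * s₂ * s₁ * e = e * s₁ * s₂ * e * s₂ * s₁) :
    s₁ * s₂ * e * s₂ * s₁ * e = e * s₁ * s₂ * e := by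
  have hcomm : Commute (s₁ * s₂) (e * (s₁ * s₂ * e)) := by
    calc s₁ * s₂ * (e * (s₁ * s₂ * e)) = s₁ * s₂ * e * (s₂ * s₁) * e := by
          rw [← h3]; simp only [mul_assoc]
      _ = e * s₁ * s₂ * e * (s₂ * s₁) := by rw [← mul_assoc _ s₂ s₁, h6, mul_assoc _ s₂ s₁]
      _ = e * (s₁ * s₂ * e) * (s₁ * s₂) := by rw [← h3]; simp only [mul_assoc]
  calc s₁ * s₂ * e * s₂ * s₁ * e = s₁ * s₂ * (e * (s₁ * s₂ * e)) := by
        rw [mul_assoc _ s₂ s₁, ← h3]; simp only [mul_assoc]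
    _ = e * (s₁ * s₂ * e) := mul_mul_eq_self_of_commute h1 h4 h5 hcomm
    _ = e * s₁ * s₂ * e := by simp only [mul_assoc]

theorem walledBrauer_relation_consequence
    (A : Type*) [Ring A] [Algebra ℂ A] (s₁ s₂ e : A)
    (h1 : s₁ ^ 2 = 1) (h2 : s₂ ^ 2 = 1)
    (h3 : s₁ * s₂ = s₂ * s₁)
    (h4 : e = e * s₁ * e) (h5 : e = e * s₂ * e)
    (h6 : s₁ * s₂ * e * s₂ * s₁ * e = e * s₁ * s₂ * e * s₂ * s₁) :
    s₁ * s₂ * e * s₂ * s₁ * e = e * s₁ * s₂ * e :=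
  walledBrauer_relation_consequence_general A s₁ s₂ e h1 h3 h4 h5 h6
end

section
/- Let A be an associative C-algebra containing elements s_{r-1}, s_{r+1}, e satisfying s_{r-1}^2 = 1, s_{r+1}^2 = 1, s_{r-1} s_{r+1} = s_{r+1} s_{r-1}, e = e s_{r-1} e = e s_{r+1} e, and s_{r-1} s_{r+1} e s_{r+1} s_{r-1} e = e s_{r-1} s_{r+1} e s_{r+1} s_{r-1}, and set e' = s_{r-1} s_{r+1} e s_{r+1} s_{r-1}. Then e e' s_{r-1} s_{r+1} = e e' and e e' = e' e. -/
/-!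
Put `s = s₁ s₂`, an involution with `e' = s e s` and `s₂ = s₁ s`. The last relation says that
`e'` commutes with `e`, which is the second identity. It also gives
`e e' = e s₁ (e e') = e s₁ (e' e) = (e s₂ e) s e = e s e`,
and then `e e' s = e s e s s = e s e = e e'`.
-/

theorem mul_conj_eq_of_commute {M : Type*} [Semigroup M] {e a s : M}
    (ha : e * a * e = e) (has : e * (a * s) * e = e) (hc : Commute (s * e * s) e) :
    e * (s * e * s) = e * s * e :=
  calc e * (s * e * s) = e * a * (e * (s * e * s)) := by rw [← mul_assoc (e * a), ha]
    _ = e * a * (s * e * s * e) := by rw [hc.eq]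
    _ = e * (a * s) * e * s * e := by simp only [mul_assoc]
    _ = e * s * e := by rw [has]

theorem walledBrauer_ee'_identities_general
    (A : Type*) [Ring A] (s₁ s₂ e : A)
    (h1 : s₁ ^ 2 = 1) (h2 : s₂ ^ 2 = 1)
    (h3 : s₁ * s₂ = s₂ * s₁)
    (h4 : e = e * s₁ * e) (h5 : e = e * s₂ * e)
    (h6 : s₁ * s₂ * e * s₂ * s₁ * e = e * s₁ * s₂ * e * s₂ * s₁)
    (e' : A) (he' : e' = s₁ * s₂ * e * s₂ * s₁) :
    e * e' * s₁ * s₂ = e * e' ∧ e * e' = e' * e := by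
  have hs : s₁ * s₂ * (s₁ * s₂) = 1 := by
    rw [← sq, Commute.mul_pow h3, h1, h2, one_mul]
  have he's : e' = s₁ * s₂ * e * (s₁ * s₂) := by
    rw [he', h3]; simp only [mul_assoc]
  have hcomm : Commute e' e := by
    change e' * e = e * e'
    rw [he']; simpa only [mul_assoc] using h6
  have hs₂ : e * (s₁ * (s₁ * s₂)) * e = e := by
    rw [← mul_assoc s₁, ← sq, h1, one_mul, ← h5]
  have key : e * e' = e * (s₁ * s₂) * e := by
    rw [he's] at hcomm ⊢
    exact mul_conj_eq_of_commute h4.symm hs₂ hcomm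
  refine ⟨?_, hcomm.eq.symm⟩
  calc e * e' * s₁ * s₂ = e * (s₁ * s₂) * e * (s₁ * s₂ * (s₁ * s₂)) := by
        rw [he's]; simp only [mul_assoc]
    _ = e * (s₁ * s₂) * e := by rw [hs, mul_one]
    _ = e * e' := key.symm

theorem walledBrauer_ee'_identities
    (A : Type*) [Ring A] [Algebra ℂ A] (s₁ s₂ e : A)
    (h1 : s₁ ^ 2 = 1) (h2 : s₂ ^ 2 = 1)
    (h3 : s₁ * s₂ = s₂ * s₁)
    (h4 : e = e * s₁ * e) (h5 : e = e * s₂ * e)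
    (h6 : s₁ * s₂ * e * s₂ * s₁ * e = e * s₁ * s₂ * e * s₂ * s₁)
    (e' : A) (he' : e' = s₁ * s₂ * e * s₂ * s₁) :
    e * e' * s₁ * s₂ = e * e' ∧ e * e' = e' * e :=
  walledBrauer_ee'_identities_general A s₁ s₂ e h1 h2 h3 h4 h5 h6 e' he'
end
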